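/- arXiv:1312.5442 — 7 statements merged into one kernel-verified Lean document; each statement's English description precedes it below -/
import Mathlib

section
/- (Proposition 1, converse direction.) Let (X,Y) be a random vector and suppose that for every pair β, γ ≥ 0 not both zero there exist κ(β,γ) ∈ ℝ and a slowly varying function t ↦ L(t; β, γ) such that P(X > t^β, Y > t^γ) = L(t; β, γ)·t^{−κ(β,γ)} for all t ≥ 1. Fix δ₁, δ₂, ε₁, ε₂ ≥ 0 with δ₁+ε₁ > 0 and δ₂+ε₂ > 0, and suppose κ is strictly subadditive at these points: κ(δ₁+δ₂, ε₁+ε₂) < κ(δ₁, ε₁) + κ(δ₂, ε₂). Then there exists T = T(δ₁,δ₂,ε₁,ε₂) such that for all t > T, P(X > t^{δ₁+δ₂}, Y > t^{ε₁+ε₂}) ≥ P(X > t^{δ₁}, Y > t^{ε₁}) · P(X > t^{δ₂}, Y > t^{ε₂}). -/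
open MeasureTheory Filter

/-- Proposition 1, converse direction: under the regular variation
representation, strict subadditivity of κ at `(δ₁,ε₁), (δ₂,ε₂)` implies the tail
product inequality eventually holds. -/
theorem tail_inequality_of_strict_subadditivity
    {Ω : Type*} [MeasurableSpace Ω] (μ : Measure Ω) [IsProbabilityMeasure μ]
    (X Y : Ω → ℝ)
    (hX : ∀ᵐ a ∂μ, 1 ≤ X a) (hY : ∀ᵐ a ∂μ, 1 ≤ Y a)
    (κ : ℝ → ℝ → ℝ) (L : ℝ → ℝ → ℝ → ℝ)
    (hLpos : ∀ β γ : ℝ, 0 ≤ β → 0 ≤ γ → ¬(β = 0 ∧ γ = 0) →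
      ∀ t > (0:ℝ), 0 < L β γ t)
    (hLsv : ∀ β γ : ℝ, 0 ≤ β → 0 ≤ γ → ¬(β = 0 ∧ γ = 0) →
      ∀ c > (0:ℝ), Tendsto (fun t => L β γ (c * t) / L β γ t) atTop (nhds 1))
    (hrep : ∀ β γ : ℝ, 0 ≤ β → 0 ≤ γ → ¬(β = 0 ∧ γ = 0) → ∀ t ≥ (1:ℝ),
      (μ {a | X a > t ^ β ∧ Y a > t ^ γ}).toReal = L β γ t * t ^ (-κ β γ))
    (δ₁ δ₂ ε₁ ε₂ : ℝ)
    (hδ₁ : 0 ≤ δ₁) (hδ₂ : 0 ≤ δ₂) (hε₁ : 0 ≤ ε₁) (hε₂ : 0 ≤ ε₂)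
    (h₁ : 0 < δ₁ + ε₁) (h₂ : 0 < δ₂ + ε₂)
    (hstrict : κ (δ₁ + δ₂) (ε₁ + ε₂) < κ δ₁ ε₁ + κ δ₂ ε₂) :
    ∃ T : ℝ, ∀ t > T,
      (μ {a | X a > t ^ δ₁ ∧ Y a > t ^ ε₁}).toReal *
        (μ {a | X a > t ^ δ₂ ∧ Y a > t ^ ε₂}).toReal
        ≤ (μ {a | X a > t ^ (δ₁ + δ₂) ∧ Y a > t ^ (ε₁ + ε₂)}).toReal := by
  classical
  have hne : ∀ β γ : ℝ, 0 < β + γ → 0 ≤ β → 0 ≤ γ → ¬(β = 0 ∧ γ = 0) := by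
    rintro β γ h hβ hγ ⟨rfl, rfl⟩; simp at h
  obtain ⟨P, hPdef⟩ : ∃ P : ℝ → ℝ → ℝ → ℝ,
      P = fun β γ t => (μ {a | X a > t ^ β ∧ Y a > t ^ γ}).toReal := ⟨_, rfl⟩
  have hPrep : ∀ β γ : ℝ, 0 ≤ β → 0 ≤ γ → 0 < β + γ → ∀ t ≥ (1:ℝ),
      P β γ t = L β γ t * t ^ (-κ β γ) := by
    intro β γ hβ hγ h t ht
    rw [hPdef]
    exact hrep β γ hβ hγ (hne β γ h hβ hγ) t ht
  have hPpos : ∀ β γ : ℝ, 0 ≤ β → 0 ≤ γ → 0 < β + γ → ∀ t ≥ (1:ℝ), 0 < P β γ t := by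
    intro β γ hβ hγ h t ht
    rw [hPrep β γ hβ hγ h t ht]
    exact mul_pos (hLpos β γ hβ hγ (hne β γ h hβ hγ) t (by linarith))
      (Real.rpow_pos_of_pos (by linarith) _)
  have hPle1 : ∀ β γ t : ℝ, P β γ t ≤ 1 := by
    intro β γ t
    rw [hPdef]
    simpa using ENNReal.toReal_mono ENNReal.one_ne_top prob_le_one
  have hPmono : ∀ β γ : ℝ, 0 ≤ β → 0 ≤ γ → ∀ s t : ℝ, 1 ≤ s → s ≤ t →
      P β γ t ≤ P β γ s := by
    intro β γ hβ hγ s t hs hst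
    have hsub : {a | X a > t ^ β ∧ Y a > t ^ γ} ⊆ {a | X a > s ^ β ∧ Y a > s ^ γ} := by
      intro a ⟨ha1, ha2⟩
      exact ⟨lt_of_le_of_lt (Real.rpow_le_rpow (by linarith) hst hβ) ha1,
        lt_of_le_of_lt (Real.rpow_le_rpow (by linarith) hst hγ) ha2⟩
    rw [hPdef]
    exact ENNReal.toReal_mono (measure_ne_top μ _) (measure_mono hsub)
  have h₁₂ : 0 < (δ₁ + δ₂) + (ε₁ + ε₂) := by linarith
  have hδ₁₂ : 0 ≤ δ₁ + δ₂ := by linarith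
  have hε₁₂ : 0 ≤ ε₁ + ε₂ := by linarith
  obtain ⟨a, hadef⟩ : ∃ a : ℝ, a = κ δ₁ ε₁ + κ δ₂ ε₂ - κ (δ₁ + δ₂) (ε₁ + ε₂) := ⟨_, rfl⟩
  have ha : 0 < a := by rw [hadef]; linarith
  obtain ⟨r, hrdef⟩ : ∃ r : ℝ → ℝ,
      r = fun t => P δ₁ ε₁ t * P δ₂ ε₂ t / P (δ₁ + δ₂) (ε₁ + ε₂) t := ⟨_, rfl⟩
  have hrpos : ∀ t ≥ (1:ℝ), 0 < r t := by
    intro t ht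
    rw [hrdef]
    exact div_pos (mul_pos (hPpos _ _ hδ₁ hε₁ h₁ t ht) (hPpos _ _ hδ₂ hε₂ h₂ t ht))
      (hPpos _ _ hδ₁₂ hε₁₂ h₁₂ t ht)
  -- ratio along doubling
  have key : ∀ t ≥ (1:ℝ), r (2 * t) / r t =
      ((L δ₁ ε₁ (2 * t) / L δ₁ ε₁ t) * (L δ₂ ε₂ (2 * t) / L δ₂ ε₂ t) /
        (L (δ₁ + δ₂) (ε₁ + ε₂) (2 * t) / L (δ₁ + δ₂) (ε₁ + ε₂) t)) * 2 ^ (-a) := by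
    intro t ht
    have ht0 : (0:ℝ) < t := by linarith
    have h2t : (1:ℝ) ≤ 2 * t := by linarith
    have e1 := hPrep δ₁ ε₁ hδ₁ hε₁ h₁ t ht
    have e2 := hPrep δ₂ ε₂ hδ₂ hε₂ h₂ t ht
    have e3 := hPrep (δ₁+δ₂) (ε₁+ε₂) hδ₁₂ hε₁₂ h₁₂ t ht
    have f1 := hPrep δ₁ ε₁ hδ₁ hε₁ h₁ (2*t) h2t
    have f2 := hPrep δ₂ ε₂ hδ₂ hε₂ h₂ (2*t) h2t
    have f3 := hPrep (δ₁+δ₂) (ε₁+ε₂) hδ₁₂ hε₁₂ h₁₂ (2*t) h2t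
    have hL1 := (hLpos δ₁ ε₁ hδ₁ hε₁ (hne _ _ h₁ hδ₁ hε₁) t ht0).ne'
    have hL2 := (hLpos δ₂ ε₂ hδ₂ hε₂ (hne _ _ h₂ hδ₂ hε₂) t ht0).ne'
    have hL3 := (hLpos (δ₁+δ₂) (ε₁+ε₂) hδ₁₂ hε₁₂ (hne _ _ h₁₂ hδ₁₂ hε₁₂) t ht0).ne'
    have hL3' := (hLpos (δ₁+δ₂) (ε₁+ε₂) hδ₁₂ hε₁₂ (hne _ _ h₁₂ hδ₁₂ hε₁₂) (2*t)
      (by linarith)).ne'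
    have hp1 : (t:ℝ) ^ (-κ δ₁ ε₁) ≠ 0 := (Real.rpow_pos_of_pos ht0 _).ne'
    have hp2 : (t:ℝ) ^ (-κ δ₂ ε₂) ≠ 0 := (Real.rpow_pos_of_pos ht0 _).ne'
    have hp3 : (t:ℝ) ^ (-κ (δ₁+δ₂) (ε₁+ε₂)) ≠ 0 := (Real.rpow_pos_of_pos ht0 _).ne'
    have hq3 : ((2:ℝ) ^ (-κ (δ₁+δ₂) (ε₁+ε₂))) ≠ 0 :=
      (Real.rpow_pos_of_pos two_pos _).ne'
    have hm1 : ((2:ℝ) * t) ^ (-κ δ₁ ε₁) = 2 ^ (-κ δ₁ ε₁) * t ^ (-κ δ₁ ε₁) :=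
      Real.mul_rpow (by norm_num) ht0.le
    have hm2 : ((2:ℝ) * t) ^ (-κ δ₂ ε₂) = 2 ^ (-κ δ₂ ε₂) * t ^ (-κ δ₂ ε₂) :=
      Real.mul_rpow (by norm_num) ht0.le
    have hm3 : ((2:ℝ) * t) ^ (-κ (δ₁+δ₂) (ε₁+ε₂)) =
        2 ^ (-κ (δ₁+δ₂) (ε₁+ε₂)) * t ^ (-κ (δ₁+δ₂) (ε₁+ε₂)) :=
      Real.mul_rpow (by norm_num) ht0.le
    have hsplit : (2:ℝ) ^ (-a) =
        2 ^ (-κ δ₁ ε₁) * 2 ^ (-κ δ₂ ε₂) * (2 ^ (-κ (δ₁+δ₂) (ε₁+ε₂)))⁻¹ := by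
      rw [show -a = (-κ δ₁ ε₁) + (-κ δ₂ ε₂) + κ (δ₁+δ₂) (ε₁+ε₂) by
        rw [hadef]; ring]
      rw [Real.rpow_add two_pos, Real.rpow_add two_pos,
        Real.rpow_neg (by norm_num : (0:ℝ) ≤ 2) (κ (δ₁+δ₂) (ε₁+ε₂)), inv_inv]
    rw [hrdef]
    simp only [e1, e2, e3, f1, f2, f3, hm1, hm2, hm3, hsplit]
    field_simp
  -- the limit of the doubling ratio
  have htend : Tendsto (fun t => r (2 * t) / r t) atTop (nhds (2 ^ (-a))) := by
    have l1 := hLsv δ₁ ε₁ hδ₁ hε₁ (hne _ _ h₁ hδ₁ hε₁) 2 two_pos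
    have l2 := hLsv δ₂ ε₂ hδ₂ hε₂ (hne _ _ h₂ hδ₂ hε₂) 2 two_pos
    have l3 := hLsv (δ₁+δ₂) (ε₁+ε₂) hδ₁₂ hε₁₂ (hne _ _ h₁₂ hδ₁₂ hε₁₂) 2 two_pos
    have hlim : Tendsto (fun t =>
        ((L δ₁ ε₁ (2 * t) / L δ₁ ε₁ t) * (L δ₂ ε₂ (2 * t) / L δ₂ ε₂ t) /
          (L (δ₁ + δ₂) (ε₁ + ε₂) (2 * t) / L (δ₁ + δ₂) (ε₁ + ε₂) t)) * 2 ^ (-a))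
        atTop (nhds (((1 * 1) / 1) * 2 ^ (-a))) :=
      (((l1.mul l2).div l3 one_ne_zero).mul_const _)
    simp only [one_mul, div_one] at hlim
    refine Tendsto.congr' ?_ hlim
    filter_upwards [eventually_ge_atTop (1:ℝ)] with t ht
    exact (key t ht).symm
  -- choose q with 2^(-a) < q < 1
  obtain ⟨q, hqdef⟩ : ∃ q : ℝ, q = (2 ^ (-a) + 1) / 2 := ⟨_, rfl⟩
  have h2a : (2:ℝ) ^ (-a) < 1 :=
    Real.rpow_lt_one_of_one_lt_of_neg one_lt_two (by linarith)
  have h2a0 : (0:ℝ) < 2 ^ (-a) := Real.rpow_pos_of_pos two_pos _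
  have hq0 : 0 < q := by rw [hqdef]; linarith
  have hq1 : q < 1 := by rw [hqdef]; linarith
  have hqgt : (2:ℝ) ^ (-a) < q := by rw [hqdef]; linarith
  obtain ⟨T₁, hT₁⟩ := eventually_atTop.1 (htend.eventually_lt_const hqgt)
  obtain ⟨T₀, hT₀def⟩ : ∃ T₀ : ℝ, T₀ = max T₁ 1 := ⟨_, rfl⟩
  have hT₀1 : (1:ℝ) ≤ T₀ := by rw [hT₀def]; exact le_max_right _ _
  have hT₀0 : (0:ℝ) < T₀ := by linarith
  have hstep : ∀ t, T₀ ≤ t → r (2 * t) ≤ q * r t := by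
    intro t ht
    have ht1 : (1:ℝ) ≤ t := le_trans hT₀1 ht
    have hlt := hT₁ t (le_trans (by rw [hT₀def]; exact le_max_left _ _) ht)
    have hrt := hrpos t ht1
    exact le_of_lt ((div_lt_iff₀ hrt).1 hlt)
  -- bound on the fundamental interval (T₀, 2 T₀]
  obtain ⟨M, hMdef⟩ : ∃ M : ℝ, M = 1 / P (δ₁ + δ₂) (ε₁ + ε₂) (2 * T₀) := ⟨_, rfl⟩
  have hP2T₀ : 0 < P (δ₁ + δ₂) (ε₁ + ε₂) (2 * T₀) :=
    hPpos _ _ hδ₁₂ hε₁₂ h₁₂ _ (by linarith)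
  have hM0 : 0 < M := by rw [hMdef]; positivity
  have hbase : ∀ t, T₀ < t → t ≤ 2 * T₀ → r t ≤ M := by
    intro t ht ht2
    have ht1 : (1:ℝ) ≤ t := le_trans hT₀1 ht.le
    have hnum : P δ₁ ε₁ t * P δ₂ ε₂ t ≤ 1 :=
      mul_le_one₀ (hPle1 _ _ _) (hPpos _ _ hδ₂ hε₂ h₂ t ht1).le (hPle1 _ _ _)
    have hden : P (δ₁ + δ₂) (ε₁ + ε₂) (2 * T₀) ≤ P (δ₁ + δ₂) (ε₁ + ε₂) t :=
      hPmono _ _ hδ₁₂ hε₁₂ t (2 * T₀) ht1 ht2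
    rw [hMdef, hrdef]
    exact div_le_div₀ zero_le_one hnum hP2T₀ hden
  -- the dyadic induction
  have hind : ∀ n : ℕ, ∀ t, 2 ^ n * T₀ < t → t ≤ 2 ^ (n + 1) * T₀ → r t ≤ q ^ n * M := by
    intro n
    induction n with
    | zero =>
      intro t h1' h2'
      have e1' : T₀ < t := by simpa using h1'
      have e2' : t ≤ 2 * T₀ := by
        have : (2:ℝ) ^ (0 + 1) = 2 := by norm_num
        linarith [h2', this ▸ h2']
      simpa using hbase t e1' e2'
    | succ n ih =>
      intro t h1' h2'
      have hs1 : 2 ^ n * T₀ < t / 2 := by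
        rw [lt_div_iff₀ (by norm_num : (0:ℝ) < 2)]
        calc 2 ^ n * T₀ * 2 = 2 ^ (n + 1) * T₀ := by ring
          _ < t := h1'
      have hs2 : t / 2 ≤ 2 ^ (n + 1) * T₀ := by
        rw [div_le_iff₀ (by norm_num : (0:ℝ) < 2)]
        calc t ≤ 2 ^ (n + 1 + 1) * T₀ := h2'
          _ = 2 ^ (n + 1) * T₀ * 2 := by ring
      have hone : (1:ℝ) ≤ 2 ^ n := one_le_pow₀ (by norm_num)
      have hsT₀ : T₀ ≤ t / 2 := by
        have h3 : T₀ ≤ 2 ^ n * T₀ := le_mul_of_one_le_left hT₀0.le hone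
        linarith [hs1]
      have hdb : r (2 * (t / 2)) ≤ q * r (t / 2) := hstep _ hsT₀
      rw [show 2 * (t / 2) = t by ring] at hdb
      calc r t ≤ q * r (t / 2) := hdb
      _ ≤ q * (q ^ n * M) := mul_le_mul_of_nonneg_left (ih _ hs1 hs2) hq0.le
      _ = q ^ (n + 1) * M := by ring
  -- choose N with q^N * M ≤ 1
  obtain ⟨N, hN⟩ := exists_pow_lt_of_lt_one (show (0:ℝ) < 1 / M by positivity) hq1
  have hNM : q ^ N * M ≤ 1 := by
    have := (le_div_iff₀ hM0).mp hN.le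
    linarith [this]
  refine ⟨2 ^ N * T₀, fun t ht => ?_⟩
  have hpowN : (1:ℝ) ≤ 2 ^ N := one_le_pow₀ (by norm_num)
  have hTle : T₀ ≤ 2 ^ N * T₀ := le_mul_of_one_le_left hT₀0.le hpowN
  have ht1 : (1:ℝ) ≤ t := le_trans hT₀1 (le_trans hTle ht.le)
  have hex : ∃ m : ℕ, t ≤ 2 ^ (m + 1) * T₀ := by
    obtain ⟨m, hm⟩ := pow_unbounded_of_one_lt (t / T₀) (one_lt_two : (1:ℝ) < 2)
    refine ⟨m, ?_⟩
    rw [div_lt_iff₀ hT₀0] at hm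
    have hmm : (2:ℝ) ^ m ≤ 2 ^ (m + 1) := pow_le_pow_right₀ (by norm_num) (by omega)
    have : (2:ℝ) ^ m * T₀ ≤ 2 ^ (m + 1) * T₀ := mul_le_mul_of_nonneg_right hmm hT₀0.le
    linarith [hm]
  have claim : ∀ n : ℕ, ∀ s : ℝ, 2 ^ N * T₀ < s → s ≤ 2 ^ (n + 1) * T₀ → r s ≤ 1 := by
    intro n
    induction n with
    | zero =>
      intro s hs1 hs2
      have hN0 : N = 0 := by
        by_contra hN0
        have h21 : (2:ℝ) ^ 1 ≤ 2 ^ N := pow_le_pow_right₀ (by norm_num) (by omega)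
        have h22 : (2:ℝ) ^ 1 * T₀ ≤ 2 ^ N * T₀ := mul_le_mul_of_nonneg_right h21 hT₀0.le
        have h23 : (2:ℝ) ^ (0 + 1) = 2 ^ 1 := by norm_num
        rw [h23] at hs2
        linarith [hs1, hs2, h22]
      subst hN0
      have h1 : 2 ^ 0 * T₀ < s := hs1
      have h2 := hind 0 s h1 hs2
      calc r s ≤ q ^ 0 * M := h2
        _ ≤ 1 := hNM
    | succ n ih =>
      intro s hs1 hs2
      by_cases hcase : s ≤ 2 ^ (n + 1) * T₀
      · exact ih s hs1 hcase
      · push_neg at hcase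
        have hnN : N ≤ n + 1 := by
          by_contra h
          push_neg at h
          have h21 : (2:ℝ) ^ (n + 1 + 1) ≤ 2 ^ N :=
            pow_le_pow_right₀ (by norm_num) (by omega)
          have h22 : (2:ℝ) ^ (n + 1 + 1) * T₀ ≤ 2 ^ N * T₀ :=
            mul_le_mul_of_nonneg_right h21 hT₀0.le
          linarith [hs1, hs2, h22]
        calc r s ≤ q ^ (n + 1) * M := hind (n + 1) s hcase hs2
          _ ≤ q ^ N * M := mul_le_mul_of_nonneg_right
              (pow_le_pow_of_le_one hq0.le hq1.le hnN) hM0.le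
          _ ≤ 1 := hNM
  obtain ⟨m, hm⟩ := hex
  have hr1 : r t ≤ 1 := claim m t ht hm
  have hPt : 0 < P (δ₁ + δ₂) (ε₁ + ε₂) t := hPpos _ _ hδ₁₂ hε₁₂ h₁₂ t ht1
  rw [hrdef] at hr1
  have hfin := (div_le_one hPt).1 hr1
  rw [hPdef] at hfin
  exact hfin
end

section
/- (Conditional limit along a ray.) Let (X,Y) be a random vector such that for every pair β, γ ≥ 0 not both zero, P(X > t^β, Y > t^γ) = L(t; β, γ)·t^{−κ(β,γ)} for all t ≥ 1, where each t ↦ L(t; β, γ) is positive. Fix ω ∈ (0,1) and suppose: (i) κ is differentiable at (ω, 1−ω) with partial derivatives κ₁ = ∂κ/∂β(ω,1−ω) and κ₂ = ∂κ/∂γ(ω,1−ω); and (ii) for all x, y ≥ 1, L(t; ω + log x/log t, 1−ω + log y/log t) / L(t; ω, 1−ω) → 1 as t → ∞. Then for all x, y ≥ 1, P(X > t^ω x, Y > t^{1−ω} y | X > t^ω, Y > t^{1−ω}) → x^{−κ₁} y^{−κ₂} as t → ∞; i.e., the conditional limit is that of independent Pareto variables with shape parameters κ₁ and κ₂. -/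
open MeasureTheory Filter Asymptotics

/-- conditional limit along a ray: under the representation
`P(X > t^β, Y > t^γ) = L(t;β,γ) t^{-κ(β,γ)}`, differentiability of κ at `(ω,1-ω)`
and ray-smoothness of L, the conditional law converges to independent Paretos with
shape parameters the partial derivatives `κ₁, κ₂`. -/
theorem conditional_limit_along_ray
    {Ω : Type*} [MeasurableSpace Ω] (μ : Measure Ω) [IsProbabilityMeasure μ]
    (X Y : Ω → ℝ)
    (hX : ∀ᵐ a ∂μ, 1 ≤ X a) (hY : ∀ᵐ a ∂μ, 1 ≤ Y a)
    (κ : ℝ → ℝ → ℝ) (L : ℝ → ℝ → ℝ → ℝ)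
    (hLpos : ∀ β γ : ℝ, 0 ≤ β → 0 ≤ γ → ¬(β = 0 ∧ γ = 0) →
      ∀ t > (0:ℝ), 0 < L β γ t)
    (hrep : ∀ β γ : ℝ, 0 ≤ β → 0 ≤ γ → ¬(β = 0 ∧ γ = 0) → ∀ t ≥ (1:ℝ),
      (μ {a | X a > t ^ β ∧ Y a > t ^ γ}).toReal = L β γ t * t ^ (-κ β γ))
    (ω : ℝ) (hω : ω ∈ Set.Ioo (0:ℝ) 1)
    (κ₁ κ₂ : ℝ)
    (hderiv : HasFDerivAt (fun p : ℝ × ℝ => κ p.1 p.2)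
      (κ₁ • ContinuousLinearMap.fst ℝ ℝ ℝ + κ₂ • ContinuousLinearMap.snd ℝ ℝ ℝ)
      (ω, 1 - ω))
    (hLlim : ∀ x ≥ (1:ℝ), ∀ y ≥ (1:ℝ),
      Tendsto
        (fun t : ℝ =>
          L (ω + Real.log x / Real.log t) (1 - ω + Real.log y / Real.log t) t /
            L ω (1 - ω) t)
        atTop (nhds 1)) :
    ∀ x ≥ (1:ℝ), ∀ y ≥ (1:ℝ),
      Tendsto
        (fun t : ℝ =>
          (μ {a | X a > t ^ ω * x ∧ Y a > t ^ (1 - ω) * y}).toReal /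
            (μ {a | X a > t ^ ω ∧ Y a > t ^ (1 - ω)}).toReal)
        atTop (nhds (x ^ (-κ₁) * y ^ (-κ₂))) := by
  intro x hx y hy
  obtain ⟨hω0, hω1⟩ := hω
  have hx0 : (0:ℝ) < x := lt_of_lt_of_le one_pos hx
  have hy0 : (0:ℝ) < y := lt_of_lt_of_le one_pos hy
  have hlx : 0 ≤ Real.log x := Real.log_nonneg hx
  have hly : 0 ≤ Real.log y := Real.log_nonneg hy
  set u : ℝ → ℝ := fun t => Real.log x / Real.log t with hu
  set v : ℝ → ℝ := fun t => Real.log y / Real.log t with hv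
  have hlogt : Tendsto Real.log atTop atTop := Real.tendsto_log_atTop
  have hu0 : Tendsto u atTop (nhds 0) := tendsto_const_nhds.div_atTop hlogt
  have hv0 : Tendsto v atTop (nhds 0) := tendsto_const_nhds.div_atTop hlogt
  have hEt : ∀ᶠ t : ℝ in atTop, (1:ℝ) < t := eventually_gt_atTop 1
  -- pointwise identity for the ratio
  have hmain : ∀ᶠ t : ℝ in atTop,
      (μ {a | X a > t ^ ω * x ∧ Y a > t ^ (1 - ω) * y}).toReal /
        (μ {a | X a > t ^ ω ∧ Y a > t ^ (1 - ω)}).toReal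
      = (L (ω + u t) (1 - ω + v t) t / L ω (1 - ω) t) *
          t ^ (-(κ (ω + u t) (1 - ω + v t) - κ ω (1 - ω))) := by
    filter_upwards [hEt] with t ht
    have ht0 : (0:ℝ) < t := lt_trans one_pos ht
    have hlt : 0 < Real.log t := Real.log_pos ht
    have htu : t ^ (u t) = x := by
      rw [Real.rpow_def_of_pos ht0, hu]
      simp only []
      rw [mul_comm, div_mul_cancel₀ _ (ne_of_gt hlt)]
      exact Real.exp_log hx0
    have htv : t ^ (v t) = y := by
      rw [Real.rpow_def_of_pos ht0, hv]
      simp only []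
      rw [mul_comm, div_mul_cancel₀ _ (ne_of_gt hlt)]
      exact Real.exp_log hy0
    have hβ : t ^ (ω + u t) = t ^ ω * x := by rw [Real.rpow_add ht0, htu]
    have hγ : t ^ (1 - ω + v t) = t ^ (1 - ω) * y := by rw [Real.rpow_add ht0, htv]
    have hun : 0 ≤ u t := div_nonneg hlx hlt.le
    have hvn : 0 ≤ v t := div_nonneg hly hlt.le
    have hβn : 0 ≤ ω + u t := add_nonneg hω0.le hun
    have hγn : 0 ≤ 1 - ω + v t := add_nonneg (by linarith) hvn
    have hne1 : ¬(ω + u t = 0 ∧ 1 - ω + v t = 0) := by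
      rintro ⟨h1, -⟩; nlinarith
    have hne2 : ¬(ω = 0 ∧ 1 - ω = 0) := by rintro ⟨h1, -⟩; linarith
    have hnum := hrep (ω + u t) (1 - ω + v t) hβn hγn hne1 t ht.le
    have hden := hrep ω (1 - ω) hω0.le (by linarith) hne2 t ht.le
    rw [hβ, hγ] at hnum
    rw [hnum, hden, mul_div_mul_comm]
    congr 1
    rw [← Real.rpow_sub ht0]
    congr 1
    ring
  -- convergence of the L-ratio
  have hT1 := hLlim x hx y hy
  -- asymptotic expansion of κ
  have hp : Tendsto (fun t => (ω + u t, 1 - ω + v t)) atTop (nhds (ω, 1 - ω)) := by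
    have := (hu0.const_add ω).prodMk_nhds (hv0.const_add (1 - ω))
    simpa using this
  have ho := hderiv.isLittleO.comp_tendsto hp
  simp only [Function.comp_def, Prod.mk_sub_mk, add_sub_cancel_left,
    ContinuousLinearMap.add_apply, ContinuousLinearMap.coe_smul', Pi.smul_apply,
    ContinuousLinearMap.coe_fst', ContinuousLinearMap.coe_snd', smul_eq_mul] at ho
  -- (u, v) is O(1/log t)
  have hbig : (fun t => (u t, v t)) =O[atTop] (fun t => 1 / Real.log t) := by
    rw [isBigO_iff]
    refine ⟨Real.log x + Real.log y, ?_⟩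
    filter_upwards [hEt] with t ht
    have hlt : 0 < Real.log t := Real.log_pos ht
    rw [Prod.norm_def]
    have h1 : ‖u t‖ ≤ (Real.log x + Real.log y) * ‖1 / Real.log t‖ := by
      rw [Real.norm_eq_abs, Real.norm_eq_abs, abs_of_nonneg (div_nonneg hlx hlt.le),
        abs_of_nonneg (by positivity : (0:ℝ) ≤ 1 / Real.log t)]
      rw [mul_one_div, div_le_div_iff₀ hlt hlt]
      nlinarith
    have h2 : ‖v t‖ ≤ (Real.log x + Real.log y) * ‖1 / Real.log t‖ := by
      rw [Real.norm_eq_abs, Real.norm_eq_abs, abs_of_nonneg (div_nonneg hly hlt.le),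
        abs_of_nonneg (by positivity : (0:ℝ) ≤ 1 / Real.log t)]
      rw [mul_one_div, div_le_div_iff₀ hlt hlt]
      nlinarith
    exact max_le h1 h2
  have hr : (fun t => κ (ω + u t) (1 - ω + v t) - κ ω (1 - ω) - (κ₁ * u t + κ₂ * v t))
      =o[atTop] (fun t => 1 / Real.log t) := ho.trans_isBigO hbig
  have hlr : (fun t => Real.log t *
      (κ (ω + u t) (1 - ω + v t) - κ ω (1 - ω) - (κ₁ * u t + κ₂ * v t)))
      =o[atTop] (fun t => Real.log t * (1 / Real.log t)) :=
    (isBigO_refl _ _).mul_isLittleO hr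
  have hone : (fun t : ℝ => Real.log t * (1 / Real.log t)) =ᶠ[atTop] (fun _ => (1:ℝ)) := by
    filter_upwards [hEt] with t ht
    field_simp [ne_of_gt (Real.log_pos ht)]
  have hr0 : Tendsto (fun t => Real.log t *
      (κ (ω + u t) (1 - ω + v t) - κ ω (1 - ω) - (κ₁ * u t + κ₂ * v t)))
      atTop (nhds 0) := by
    rw [← isLittleO_one_iff ℝ]
    exact hlr.congr' EventuallyEq.rfl hone
  have hE : Tendsto (fun t => Real.log t * (κ (ω + u t) (1 - ω + v t) - κ ω (1 - ω)))
      atTop (nhds (κ₁ * Real.log x + κ₂ * Real.log y)) := by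
    have := hr0.add (tendsto_const_nhds (x := κ₁ * Real.log x + κ₂ * Real.log y))
    rw [zero_add] at this
    refine this.congr' ?_
    filter_upwards [hEt] with t ht
    have hlt : 0 < Real.log t := Real.log_pos ht
    have h1 : Real.log t * u t = Real.log x := by
      rw [hu]; field_simp
    have h2 : Real.log t * v t = Real.log y := by
      rw [hv]; field_simp
    show Real.log t * (κ (ω + u t) (1 - ω + v t) - κ ω (1 - ω) - (κ₁ * u t + κ₂ * v t)) +
      (κ₁ * Real.log x + κ₂ * Real.log y) = Real.log t * (κ (ω + u t) (1 - ω + v t) - κ ω (1 - ω))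
    linear_combination (-κ₁) * h1 + (-κ₂) * h2
  have hT2 : Tendsto (fun t : ℝ => t ^ (-(κ (ω + u t) (1 - ω + v t) - κ ω (1 - ω))))
      atTop (nhds (x ^ (-κ₁) * y ^ (-κ₂))) := by
    have hexp : Tendsto (fun t => Real.exp (-(Real.log t *
        (κ (ω + u t) (1 - ω + v t) - κ ω (1 - ω)))))
        atTop (nhds (Real.exp (-(κ₁ * Real.log x + κ₂ * Real.log y)))) :=
      (Real.continuous_exp.tendsto _).comp hE.neg
    have heq : x ^ (-κ₁) * y ^ (-κ₂) = Real.exp (-(κ₁ * Real.log x + κ₂ * Real.log y)) := by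
      rw [Real.rpow_def_of_pos hx0, Real.rpow_def_of_pos hy0, ← Real.exp_add]
      ring_nf
    rw [heq]
    refine hexp.congr' ?_
    filter_upwards [hEt] with t ht
    rw [Real.rpow_def_of_pos (lt_trans one_pos ht)]
    ring_nf
  have := hT1.mul hT2
  rw [one_mul] at this
  exact this.congr' (Filter.EventuallyEq.symm hmain)
end

section
/- (Proposition 2: strong joint tail dependence forces κ to be the maximum.) Let X = (X₁, …, X_d) be a random vector such that each X_i ≥ 1 almost surely and P(X_i > x) = 1/x for all x ≥ 1 (standard Pareto margins). Suppose the limit χ := lim_{t→∞} P(X₂ > t, …, X_d > t | X₁ > t) exists and χ > 0. If for β = (β₁, …, β_d) ∈ ℝ^d₊ \ {0} the limit κ(β) := −lim_{t→∞} log P(X₁ > t^{β₁}, …, X_d > t^{β_d})/log t exists in ℝ, then κ(β) = max_{1 ≤ i ≤ d} β_i. -/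
open MeasureTheory Filter

/-- Proposition 2: with standard Pareto margins, if the vector
exhibits d-dimensional strong joint tail dependence (`χ > 0`), then
`κ(β) = max_i β_i` whenever the limit defining κ(β) exists. -/
theorem kappa_eq_max_of_strong_joint_tail_dependence
    {Ω : Type*} [MeasurableSpace Ω] (μ : Measure Ω) [IsProbabilityMeasure μ]
    (d : ℕ) (hd : 2 ≤ d) (X : Fin d → Ω → ℝ)
    (hXas : ∀ i, ∀ᵐ a ∂μ, 1 ≤ X i a)
    (hXmarg : ∀ i, ∀ x ≥ (1:ℝ), (μ {a | X i a > x}).toReal = 1 / x)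
    (χ : ℝ) (hχpos : 0 < χ)
    (hχ : Tendsto
      (fun t : ℝ =>
        (μ {a | ∀ i, X i a > t}).toReal / (μ {a | X ⟨0, by omega⟩ a > t}).toReal)
      atTop (nhds χ))
    (β : Fin d → ℝ) (hβ : ∀ i, 0 ≤ β i) (hβ0 : β ≠ 0)
    (κ : ℝ)
    (hκ : Tendsto
      (fun t : ℝ =>
        -Real.log (μ {a | ∀ i, X i a > t ^ β i}).toReal / Real.log t)
      atTop (nhds κ)) :
    κ = ⨆ i, β i := by
  classical
  set f : ℝ → ℝ := fun t => (μ {a | ∀ i, X i a > t ^ β i}).toReal with hfdef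
  set h : ℝ → ℝ := fun s => (μ {a | ∀ i, X i a > s}).toReal with hhdef
  set M : ℝ := ⨆ i, β i with hMdef
  have hne : Nonempty (Fin d) := ⟨⟨0, by omega⟩⟩
  have hMge : ∀ i, β i ≤ M := fun i => le_ciSup (Set.finite_range β).bddAbove i
  obtain ⟨j, hj⟩ : ∃ j, 0 < β j := by
    by_contra hcon
    push_neg at hcon
    exact hβ0 (funext fun i => le_antisymm (hcon i) (hβ i))
  have hMpos : 0 < M := hj.trans_le (hMge j)
  -- lower bound on h from the tail dependence limit
  have hratio : ∀ᶠ s in atTop,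
      χ / 2 < h s / (μ {a | X ⟨0, by omega⟩ a > s}).toReal :=
    hχ.eventually (eventually_gt_nhds (by linarith))
  have hh : ∀ᶠ s in atTop, χ / 2 * (1 / s) ≤ h s := by
    filter_upwards [hratio, eventually_ge_atTop (1:ℝ)] with s hs hs1
    have hp : (μ {a | X ⟨0, by omega⟩ a > s}).toReal = 1 / s := hXmarg _ s hs1
    rw [hp] at hs
    have hs0 : (0:ℝ) < 1 / s := one_div_pos.mpr (by linarith)
    exact (le_div_iff₀ hs0).mp hs.le
  -- lower bound on f
  have hf_lb : ∀ᶠ t in atTop, χ / 2 * (1 / t ^ M) ≤ f t := by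
    have h1 := (tendsto_rpow_atTop hMpos).eventually hh
    filter_upwards [h1, eventually_ge_atTop (1:ℝ)] with t ht ht1
    refine ht.trans ?_
    refine ENNReal.toReal_mono (measure_ne_top μ _) (measure_mono ?_)
    intro a ha i
    exact lt_of_le_of_lt (Real.rpow_le_rpow_of_exponent_le ht1 (hMge i)) (ha i)
  have hfpos : ∀ᶠ t in atTop, 0 < f t := by
    filter_upwards [hf_lb, eventually_gt_atTop (1:ℝ)] with t ht ht1
    have htM : (0:ℝ) < t ^ M := Real.rpow_pos_of_pos (by linarith) M
    have h2 : (0:ℝ) < χ / 2 * (1 / t ^ M) :=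
      mul_pos (by linarith) (one_div_pos.mpr htM)
    exact h2.trans_le ht
  -- each β i is ≤ κ
  have hβle : ∀ i, β i ≤ κ := by
    intro i
    refine ge_of_tendsto hκ ?_
    filter_upwards [hfpos, eventually_gt_atTop (1:ℝ)] with t htf ht1
    have ht0 : (0:ℝ) < t := by linarith
    have h1 : (1:ℝ) ≤ t ^ β i := by
      simpa [Real.rpow_zero] using
        Real.rpow_le_rpow_of_exponent_le ht1.le (hβ i)
    have hup : f t ≤ 1 / t ^ β i := by
      calc f t ≤ (μ {a | X i a > t ^ β i}).toReal :=
            ENNReal.toReal_mono (measure_ne_top μ _)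
              (measure_mono fun a ha => ha i)
        _ = 1 / t ^ β i := hXmarg i _ h1
    have hlogt : 0 < Real.log t := Real.log_pos ht1
    have hlog : Real.log (f t) ≤ -(β i * Real.log t) := by
      have h2 := Real.log_le_log htf hup
      rwa [one_div, Real.log_inv, Real.log_rpow ht0] at h2
    rw [le_div_iff₀ hlogt]
    linarith
  -- κ ≤ M
  have hκleM : κ ≤ M := by
    have h1 : Tendsto (fun t : ℝ => Real.log (χ / 2) / Real.log t)
        atTop (nhds 0) := by
      have h2 := Real.tendsto_log_atTop.inv_tendsto_atTop
      have h3 := h2.const_mul (Real.log (χ / 2))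
      simpa [div_eq_mul_inv] using h3
    have hlim : Tendsto (fun t : ℝ => M - Real.log (χ / 2) / Real.log t)
        atTop (nhds M) := by
      simpa using (tendsto_const_nhds (x := M) (f := atTop)).sub h1
    refine le_of_tendsto_of_tendsto hκ hlim ?_
    filter_upwards [hf_lb, hfpos, eventually_gt_atTop (1:ℝ)] with t hlb htf ht1
    have ht0 : (0:ℝ) < t := by linarith
    have hlogt : 0 < Real.log t := Real.log_pos ht1
    have htM : (0:ℝ) < t ^ M := Real.rpow_pos_of_pos ht0 M
    have hlog : Real.log (χ / 2) + -(M * Real.log t) ≤ Real.log (f t) := by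
      have h2 : Real.log (χ / 2 * (1 / t ^ M)) ≤ Real.log (f t) :=
        Real.log_le_log (by positivity) hlb
      rwa [Real.log_mul (by positivity) (by positivity), one_div,
        Real.log_inv, Real.log_rpow ht0] at h2
    show -Real.log (f t) / Real.log t ≤ M - Real.log (χ / 2) / Real.log t
    rw [div_le_iff₀ hlogt, sub_mul, div_mul_cancel₀ _ hlogt.ne']
    linarith
  exact le_antisymm hκleM (ciSup_le hβle)
end

section
/- (Normal quantile asymptotic expansion.) Let Φ be the cumulative distribution function of the standard normal distribution on ℝ, let β > 0, and for each integer n ≥ 2 let x_β(n) be the unique real number with Φ(x_β(n)) = 1 − n^{−β}. Then x_β(n) = (2β log n)^{1/2} − (log log n^β + log 4π) / (2(2β log n)^{1/2}) + o((log n)^{−1/2}) as n → ∞; in particular x_β(n)/(2β log n)^{1/2} → 1. -/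
open MeasureTheory Filter Real

/-- The standard normal cumulative distribution function. -/
noncomputable def stdNormalCDF (x : ℝ) : ℝ :=
  ∫ u in Set.Iic x, (Real.sqrt (2 * Real.pi))⁻¹ * Real.exp (-u ^ 2 / 2)

/-!
Write `φ` for the standard normal density and `Q = 1 - Φ` for its upper tail. The Mills-ratio
bounds `x / (1 + x²) · φ x ≤ Q x ≤ φ x / x` give `2 log Q(x) = -x² - log x² - log 2π + o(1)`.
Since `Q (x_β(n)) = n^{-β} → 0` forces `x_β(n) → ∞`, the square `y = x_β(n)²` solves
`y + log y = L - log 2π + o(1)` with `L = 2β log n`. Hence `y / L → 1`, so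
`y = L - log L - log 2π + o(1)`, and `x - √L = (y - L) / (x + √L)` turns this into the expansion.
-/

open Set Topology ProbabilityTheory

lemma hasDerivAt_gaussianPDFReal (μ : ℝ) (v : NNReal) (x : ℝ) :
    HasDerivAt (gaussianPDFReal μ v) (-(x - μ) / v * gaussianPDFReal μ v x) x := by
  rcases eq_or_ne v 0 with rfl | hv
  · simp
  have hv' : (v : ℝ) ≠ 0 := by exact_mod_cast hv
  have h : HasDerivAt (fun y => -(y - μ) ^ 2 / (2 * v)) (-(x - μ) / v) x :=
    (((hasDerivAt_id x).sub_const μ).pow 2).neg.div_const (2 * (v : ℝ)) |>.congr_deriv (by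
      field_simp; simp)
  rw [gaussianPDFReal_def]
  exact (h.exp.const_mul (√(2 * π * v))⁻¹).congr_deriv (by ring)

lemma tendsto_gaussianPDFReal_atTop (μ : ℝ) (v : NNReal) :
    Tendsto (gaussianPDFReal μ v) atTop (𝓝 0) := by
  rcases eq_or_ne v 0 with rfl | hv
  · exact gaussianPDFReal_zero_var μ ▸ tendsto_const_nhds
  have h : Tendsto (fun y => -(y - μ) ^ 2 / (2 * v)) atTop atBot := by
    refine Tendsto.atBot_div_const (by positivity) (tendsto_neg_atTop_atBot.comp ?_)
    exact (tendsto_pow_atTop two_ne_zero).comp (tendsto_atTop_add_const_right _ _ tendsto_id)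
  rw [gaussianPDFReal_def]
  simpa using (tendsto_exp_atBot.comp h).const_mul (√(2 * π * v))⁻¹

local notation "φ" => gaussianPDFReal 0 1

lemma gaussianPDFReal_zero_one (u : ℝ) : φ u = (√(2 * π))⁻¹ * exp (-u ^ 2 / 2) := by
  simp [gaussianPDFReal]

lemma hasDerivAt_gaussianPDFReal_zero_one (u : ℝ) : HasDerivAt φ (-u * φ u) u := by
  simpa using hasDerivAt_gaussianPDFReal 0 1 u

lemma log_gaussianPDFReal_zero_one (u : ℝ) : log (φ u) = -u ^ 2 / 2 - log (2 * π) / 2 := by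
  rw [gaussianPDFReal_zero_one, log_mul (by positivity) (exp_pos _).ne', log_inv, log_exp,
    log_sqrt (by positivity)]
  ring

lemma integrable_mul_gaussianPDFReal_zero_one : Integrable fun u => u * φ u := by
  refine ((integrable_mul_exp_neg_mul_sq (b := 1 / 2) (by norm_num)).const_mul
    (√(2 * π))⁻¹).congr (.of_forall fun u => ?_)
  simp only [gaussianPDFReal_zero_one]
  ring_nf

lemma setIntegral_Ioi_mul_gaussianPDFReal_zero_one (x : ℝ) : ∫ u in Ioi x, u * φ u = φ x := by
  have := integral_Ioi_of_hasDerivAt_of_tendsto' (a := x) (f := fun u => -φ u) (m := 0)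
    (fun u _ => (hasDerivAt_gaussianPDFReal_zero_one u).neg.congr_deriv (by ring))
    integrable_mul_gaussianPDFReal_zero_one.integrableOn
    (by simpa using (tendsto_gaussianPDFReal_atTop 0 1).neg)
  simpa using this

noncomputable def stdNormalTail (x : ℝ) : ℝ := ∫ u in Ioi x, φ u

lemma stdNormalCDF_add_stdNormalTail (x : ℝ) : stdNormalCDF x + stdNormalTail x = 1 := by
  have hφ : Integrable φ := integrable_gaussianPDFReal 0 1
  rw [← integral_gaussianPDFReal_eq_one 0 one_ne_zero, ← intervalIntegral.integral_Iic_add_Ioi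
    (b := x) hφ.integrableOn hφ.integrableOn, stdNormalTail, stdNormalCDF]
  simp only [gaussianPDFReal_zero_one]

lemma stdNormalTail_pos (x : ℝ) : 0 < stdNormalTail x := by
  rw [stdNormalTail, setIntegral_pos_iff_support_of_nonneg_ae
    (.of_forall fun u => gaussianPDFReal_nonneg 0 1 u) (integrable_gaussianPDFReal 0 1).integrableOn]
  simp [Function.support, (gaussianPDFReal_pos 0 1 _ one_ne_zero).ne']

lemma stdNormalTail_antitone : Antitone stdNormalTail := fun _ _ hab =>
  setIntegral_mono_set (integrable_gaussianPDFReal 0 1).integrableOn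
    (.of_forall fun u => gaussianPDFReal_nonneg 0 1 u) (.of_forall fun _ hu => hab.trans_lt hu)

lemma tendsto_atTop_of_tendsto_stdNormalTail {ι : Type*} {l : Filter ι} {x : ι → ℝ}
    (h : Tendsto (fun i => stdNormalTail (x i)) l (𝓝 0)) : Tendsto x l atTop :=
  tendsto_atTop.2 fun M => (h.eventually_lt_const (stdNormalTail_pos M)).mono fun _ hi =>
    le_of_lt (stdNormalTail_antitone.reflect_lt hi)

lemma stdNormalTail_le_div {x : ℝ} (hx : 0 < x) : stdNormalTail x ≤ φ x / x := by
  rw [← setIntegral_Ioi_mul_gaussianPDFReal_zero_one, le_div_iff₀ hx, stdNormalTail,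
    ← integral_mul_const]
  refine setIntegral_mono_on ((integrable_gaussianPDFReal 0 1).integrableOn.mul_const x)
    integrable_mul_gaussianPDFReal_zero_one.integrableOn measurableSet_Ioi fun u hu => ?_
  rw [mul_comm]
  exact mul_le_mul_of_nonneg_right (le_of_lt hu) (gaussianPDFReal_nonneg 0 1 u)

lemma tendsto_div_one_add_sq_atTop : Tendsto (fun u : ℝ => u / (1 + u ^ 2)) atTop (𝓝 0) := by
  refine tendsto_of_tendsto_of_tendsto_of_le_of_le' tendsto_const_nhds tendsto_inv_atTop_zero
    ?_ ?_ <;> filter_upwards [eventually_gt_atTop 0] with u hu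
  · positivity
  · rw [div_le_iff₀ (by positivity)]
    field_simp
    nlinarith

/-- Gordon's lower bound for the Mills ratio. -/
lemma div_one_add_sq_mul_le_stdNormalTail (x : ℝ) : x / (1 + x ^ 2) * φ x ≤ stdNormalTail x := by
  have hpos (u : ℝ) : 1 + u ^ 2 ≠ 0 := by positivity
  have hderiv (u : ℝ) : HasDerivAt (fun u => -(u / (1 + u ^ 2) * φ u))
      ((1 - 2 / (1 + u ^ 2) ^ 2) * φ u) u := by
    have := (((hasDerivAt_id' u).div ((hasDerivAt_pow 2 u).const_add 1) (hpos u)).mul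
      (hasDerivAt_gaussianPDFReal_zero_one u)).neg
    refine this.congr_deriv ?_
    simp only [Pi.div_apply]
    field_simp
    ring
  have hbound (u : ℝ) : ‖1 - 2 / (1 + u ^ 2) ^ 2‖ ≤ 1 := by
    have h0 : 0 ≤ 2 / (1 + u ^ 2) ^ 2 := by positivity
    have h2 : 2 / (1 + u ^ 2) ^ 2 ≤ 2 := div_le_self (by norm_num) (one_le_pow₀ (by nlinarith))
    rw [Real.norm_eq_abs, abs_le]
    constructor <;> linarith
  have hint : Integrable fun u => (1 - 2 / (1 + u ^ 2) ^ 2) * φ u :=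
    (integrable_gaussianPDFReal 0 1).bdd_mul
      (by fun_prop : Measurable fun u : ℝ => 1 - 2 / (1 + u ^ 2) ^ 2).aestronglyMeasurable
      (.of_forall hbound)
  have heq := integral_Ioi_of_hasDerivAt_of_tendsto' (a := x) (fun u _ => hderiv u)
    hint.integrableOn
    (by simpa using (tendsto_div_one_add_sq_atTop.mul (tendsto_gaussianPDFReal_atTop 0 1)).neg)
  rw [zero_sub, neg_neg] at heq
  rw [← heq, stdNormalTail]
  refine setIntegral_mono hint.integrableOn (integrable_gaussianPDFReal 0 1).integrableOn
    fun u => ?_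
  have := gaussianPDFReal_nonneg 0 1 u
  have : 0 ≤ 2 / (1 + u ^ 2) ^ 2 := by positivity
  nlinarith

lemma tendsto_stdNormalTail_mul_div : Tendsto (fun x => stdNormalTail x * x / φ x) atTop (𝓝 1) := by
  have hlower : Tendsto (fun x : ℝ => 1 - 1 / (1 + x ^ 2)) atTop (𝓝 1) := by
    simpa using (tendsto_inv_atTop_zero.comp <| tendsto_atTop_add_const_left _ 1 <|
      tendsto_pow_atTop (α := ℝ) two_ne_zero).const_sub 1
  refine tendsto_of_tendsto_of_tendsto_of_le_of_le' hlower tendsto_const_nhds ?_ ?_ <;>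
    filter_upwards [eventually_gt_atTop 0] with x hx
  · rw [le_div_iff₀ (gaussianPDFReal_pos 0 1 x one_ne_zero)]
    calc (1 - 1 / (1 + x ^ 2)) * φ x = x / (1 + x ^ 2) * φ x * x := by field_simp; ring
      _ ≤ stdNormalTail x * x := by gcongr; exact div_one_add_sq_mul_le_stdNormalTail x
  · rw [div_le_one (gaussianPDFReal_pos 0 1 x one_ne_zero), ← le_div_iff₀ hx]
    exact stdNormalTail_le_div hx

lemma tendsto_two_mul_log_stdNormalTail_add :
    Tendsto (fun x => 2 * log (stdNormalTail x) + x ^ 2 + log (x ^ 2)) atTop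
      (𝓝 (-log (2 * π))) := by
  have h := ((continuousAt_log one_ne_zero).tendsto.comp tendsto_stdNormalTail_mul_div).const_mul 2
  rw [log_one, mul_zero] at h
  refine (zero_sub (log (2 * π)) ▸ h.sub_const (log (2 * π))).congr' ?_
  filter_upwards [eventually_gt_atTop 0] with x hx
  rw [Function.comp_apply, log_div (mul_pos (stdNormalTail_pos x) hx).ne'
    (gaussianPDFReal_pos 0 1 x one_ne_zero).ne', log_mul (stdNormalTail_pos x).ne' hx.ne',
    log_gaussianPDFReal_zero_one, log_pow]
  push_cast
  ring

lemma tendsto_log_sub_pow_div_atTop (a : ℝ) (k : ℕ) :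
    Tendsto (fun z => (log z - a) ^ k / z) atTop (𝓝 0) := by
  have hw : Tendsto (fun z => z * exp (-a)) atTop atTop :=
    tendsto_id.atTop_mul_const (exp_pos _)
  refine ((tendsto_pow_log_div_mul_add_atTop (exp a) 0 k (exp_pos a).ne').comp hw).congr' ?_
  filter_upwards [eventually_gt_atTop 0] with z hz
  rw [Function.comp_apply, log_mul hz.ne' (exp_pos _).ne', log_exp, add_zero,
    mul_left_comm, ← exp_add, add_neg_cancel, exp_zero, mul_one, sub_eq_add_neg]

-- `x - √L = (x² - L) / (x + √L)`, applied once to `x - √L` and once more inside the remainder.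
lemma sub_sub_div_two_sqrt_mul_sqrt {x L : ℝ} (c : ℝ) (hx : 0 < x) (hL : 0 < L) :
    (x - (√L - c / (2 * √L))) * √L = (x ^ 2 - L + c) * (√L / (x + √L)) +
      (c / L * (x ^ 2 - L + c) - c ^ 2 / L) * ((√L / (x + √L)) ^ 2 / 2) := by
  obtain ⟨s, hs, rfl⟩ : ∃ s, 0 < s ∧ L = s ^ 2 := ⟨√L, sqrt_pos.2 hL, (sq_sqrt hL.le).symm⟩
  rw [sqrt_sq hs.le]
  field_simp
  ring

section
variable {ι : Type*} {l : Filter ι}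

lemma tendsto_div_of_tendsto_add_log_sub {y L : ι → ℝ} {a : ℝ} (hL : Tendsto L l atTop)
    (hy : ∀ᶠ i in l, 0 < y i) (h : Tendsto (fun i => y i + log (y i) - L i) l (𝓝 a)) :
    Tendsto (fun i => y i / L i) l (𝓝 1) := by
  have hsum : Tendsto (fun i => y i + log (y i)) l atTop :=
    (h.add_atTop hL).congr fun i => sub_add_cancel _ _
  have hy_top : Tendsto y l atTop := by
    refine tendsto_atTop_mono' l ?_ (hsum.atTop_div_const two_pos)
    filter_upwards [hy] with i hi
    linarith [log_le_sub_one_of_pos hi]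
  have hdiv_y : Tendsto (fun i => (y i + log (y i)) / y i) l (𝓝 1) := by
    have := ((tendsto_pow_log_div_mul_add_atTop 1 0 1 one_ne_zero).comp hy_top).const_add 1
    simp only [Function.comp_def, pow_one, one_mul, add_zero] at this
    refine this.congr' ?_
    filter_upwards [hy] with i hi
    rw [add_div, div_self hi.ne']
  have hdiv_L : Tendsto (fun i => (y i + log (y i)) / L i) l (𝓝 1) := by
    have := (h.div_atTop hL).const_add 1
    rw [add_zero] at this
    refine this.congr' ?_
    filter_upwards [hL.eventually_gt_atTop 0] with i hi
    field_simp
    ring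
  have := hdiv_L.div hdiv_y one_ne_zero
  rw [div_one] at this
  refine this.congr' ?_
  filter_upwards [hsum.eventually_gt_atTop 0] with i hs
  rw [Pi.div_apply, div_div_div_cancel_left' _ _ hs.ne']

lemma tendsto_sqrt_expansion {x L : ι → ℝ} {a : ℝ} (hL : Tendsto L l atTop)
    (hx : ∀ᶠ i in l, 0 < x i) (h : Tendsto (fun i => x i ^ 2 + log (x i ^ 2) - L i) l (𝓝 a)) :
    Tendsto (fun i => (x i - (√(L i) - (log (L i) - a) / (2 * √(L i)))) * √(L i)) l (𝓝 0) ∧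
      Tendsto (fun i => x i / √(L i)) l (𝓝 1) := by
  have hsq := tendsto_div_of_tendsto_add_log_sub hL (hx.mono fun _ hi => pow_pos hi 2) h
  have hratio : Tendsto (fun i => x i / √(L i)) l (𝓝 1) := by
    have := (continuous_sqrt.tendsto 1).comp hsq
    rw [sqrt_one] at this
    refine this.congr' ?_
    filter_upwards [hx, hL.eventually_ge_atTop 0] with i hi hLi
    rw [Function.comp_apply, sqrt_div' _ hLi, sqrt_sq hi.le]
  refine ⟨?_, hratio⟩
  have hδ : Tendsto (fun i => x i ^ 2 - L i + (log (L i) - a)) l (𝓝 0) := by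
    have := (h.sub_const a).sub ((continuousAt_log one_ne_zero).tendsto.comp hsq)
    rw [sub_self, log_one, sub_zero] at this
    refine this.congr' ?_
    filter_upwards [hx, hL.eventually_gt_atTop 0] with i hi hLi
    rw [Function.comp_apply, log_div (pow_pos hi 2).ne' hLi.ne']
    ring
  have hc : Tendsto (fun i => (log (L i) - a) / L i) l (𝓝 0) := by
    simpa [Function.comp_def] using (tendsto_log_sub_pow_div_atTop a 1).comp hL
  have hc_sq : Tendsto (fun i => (log (L i) - a) ^ 2 / L i) l (𝓝 0) :=
    (tendsto_log_sub_pow_div_atTop a 2).comp hL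
  have hq : Tendsto (fun i => √(L i) / (x i + √(L i))) l (𝓝 (1 / 2)) := by
    have := (hratio.add_const 1).inv₀ (by norm_num)
    rw [show ((1 : ℝ) + 1)⁻¹ = 1 / 2 by norm_num] at this
    refine this.congr' ?_
    filter_upwards [hx, hL.eventually_gt_atTop 0] with i hi hLi
    have : 0 < √(L i) := sqrt_pos.2 hLi
    field_simp
  have := (hδ.mul hq).add (((hc.mul hδ).sub hc_sq).mul ((hq.pow 2).div_const 2))
  rw [zero_mul, mul_zero, sub_zero, zero_mul, add_zero] at this
  refine this.congr' ?_
  filter_upwards [hx, hL.eventually_gt_atTop 0] with i hi hLi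
  rw [sub_sub_div_two_sqrt_mul_sqrt _ hi hLi]

end

lemma log_log_rpow_add_log_four_mul_pi {β y : ℝ} (hβ : 0 < β) (hy : 1 < y) :
    log (log (y ^ β)) + log (4 * π) = log (2 * β * log y) + log (2 * π) := by
  have hlog : 0 < log y := log_pos hy
  rw [log_rpow (by linarith), log_mul (by positivity) (by positivity),
    log_mul (by positivity) (by positivity), log_mul (by positivity) (by positivity),
    log_mul (by positivity) (by positivity), log_mul (by positivity) (by positivity),
    show (4 : ℝ) = 2 ^ 2 by norm_num, log_pow]
  push_cast
  ring

/-- normal quantile asymptotic expansion: if `Φ(x_β(n)) = 1 - n^{-β}`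
then `x_β(n) = √(2β log n) − (log log n^β + log 4π)/(2√(2β log n)) + o((log n)^{-1/2})`,
and in particular `x_β(n)/√(2β log n) → 1`. -/
theorem normal_quantile_expansion
    (β : ℝ) (hβ : 0 < β) (xβ : ℕ → ℝ)
    (hxβ : ∀ n : ℕ, 2 ≤ n → stdNormalCDF (xβ n) = 1 - (n : ℝ) ^ (-β)) :
    Tendsto
      (fun n : ℕ =>
        (xβ n -
          (Real.sqrt (2 * β * Real.log n) -
            (Real.log (Real.log ((n : ℝ) ^ β)) + Real.log (4 * Real.pi)) /
              (2 * Real.sqrt (2 * β * Real.log n)))) * Real.sqrt (Real.log n))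
      atTop (nhds 0) ∧
    Tendsto (fun n : ℕ => xβ n / Real.sqrt (2 * β * Real.log n)) atTop (nhds 1) := by
  have hL : Tendsto (fun n : ℕ => 2 * β * log n) atTop atTop :=
    (tendsto_log_atTop.comp tendsto_natCast_atTop_atTop).const_mul_atTop (by positivity)
  have htail : ∀ᶠ n : ℕ in atTop, stdNormalTail (xβ n) = (n : ℝ) ^ (-β) := by
    filter_upwards [eventually_ge_atTop 2] with n hn
    linarith [hxβ n hn, stdNormalCDF_add_stdNormalTail (xβ n)]
  have hx : Tendsto xβ atTop atTop := tendsto_atTop_of_tendsto_stdNormalTail <|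
    ((tendsto_rpow_neg_atTop hβ).comp tendsto_natCast_atTop_atTop).congr' <|
      htail.mono fun _ h => h.symm
  have hxL : Tendsto (fun n : ℕ => xβ n ^ 2 + log (xβ n ^ 2) - 2 * β * log n) atTop
      (𝓝 (-log (2 * π))) := by
    refine (tendsto_two_mul_log_stdNormalTail_add.comp hx).congr' ?_
    filter_upwards [htail, eventually_gt_atTop 0] with n hn hn0
    rw [Function.comp_apply, hn, log_rpow (by positivity)]
    ring
  obtain ⟨hexp, hratio⟩ := tendsto_sqrt_expansion hL (hx.eventually_gt_atTop 0) hxL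
  refine ⟨?_, hratio⟩
  have := hexp.div_const √(2 * β)
  rw [zero_div] at this
  refine this.congr' ?_
  filter_upwards [eventually_gt_atTop 1] with n hn
  have hn' : (1 : ℝ) < n := by exact_mod_cast hn
  rw [log_log_rpow_add_log_four_mul_pi hβ hn', sub_neg_eq_add, mul_div_assoc,
    sqrt_mul' _ (log_nonneg hn'.le), mul_div_cancel_left₀ _ (by positivity)]
end

section
/- (Bivariate normal: joint tail decay rate in the interior regime.) Let Z₁, Z₂ be independent standard normal random variables, let ρ ∈ (−1,1), and set X = Z₁ and Y = ρZ₁ + (1−ρ²)^{1/2} Z₂. Let β, γ > 0 and let x_β(n), x_γ(n) satisfy Φ(x_β(n)) = 1 − n^{−β} and Φ(x_γ(n)) = 1 − n^{−γ}. If either ρ ≤ 0, or ρ > 0 and ρ² < min{β/γ, γ/β}, then −log P(X > x_β(n), Y > x_γ(n)) / log n → (β + γ − 2ρ(βγ)^{1/2}) / (1 − ρ²) as n → ∞. -/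
open MeasureTheory Filter ProbabilityTheory

/-!
Write `Y = ρZ₁ + √(1-ρ²)Z₂` and `I(a,b) = (a² + b² - 2ρab)/(2(1-ρ²))` for the Gaussian rate
function of `(X, Y)`. If `ρb ≤ a` and `ρa ≤ b`, the Chernoff bound for the linear combination
`(a - ρb)X + (b - ρa)Y`, i.e. in the direction `Σ⁻¹(a, b)`, gives `P(X > a, Y > b) ≤ exp(-I(a,b))`,
and the box `Z₁ ∈ (a, a+1]`, `Z₂ > (b - ρa + 1)/√(1-ρ²)` gives `P(X > a, Y > b) ≥ exp(-I(a+2, b+k))`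
for a constant `k`. The one-dimensional bounds `x²/2 ≤ -log(1 - Φ(x)) ≤ (x+2)²/2` show
`x_β(n) ~ √(2β log n)`, and the regime hypothesis is what makes `ρ x_γ(n) ≤ x_β(n)` and
`ρ x_β(n) ≤ x_γ(n)` eventually. As `I` is a quadratic form, both bounds divided by `log n` tend to
`2 I(√β, √γ)`, which is the claimed limit.
-/

open Real Set Topology
open scoped NNReal

lemma stdNormalCDF_eq_measureReal_Iic (x : ℝ) :
    stdNormalCDF x = (gaussianReal 0 1).real (Iic x) := by
  rw [measureReal_def, gaussianReal_apply_eq_integral _ one_ne_zero,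
    ENNReal.toReal_ofReal (setIntegral_nonneg measurableSet_Iic
      fun u _ => gaussianPDFReal_nonneg 0 1 u)]
  simp [stdNormalCDF, gaussianPDFReal_def]

lemma one_sub_stdNormalCDF_eq_measureReal_Ioi (x : ℝ) :
    1 - stdNormalCDF x = (gaussianReal 0 1).real (Ioi x) := by
  rw [stdNormalCDF_eq_measureReal_Iic, ← compl_Iic, probReal_compl_eq_one_sub measurableSet_Iic]

lemma monotone_stdNormalCDF : Monotone stdNormalCDF := fun x y hxy => by
  simp only [stdNormalCDF_eq_measureReal_Iic]
  exact measureReal_mono (Iic_subset_Iic.2 hxy)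

lemma hasLaw_gaussianReal_of_stdNormalCDF {Ω : Type*} [MeasurableSpace Ω] {μ : Measure Ω}
    [IsProbabilityMeasure μ] {Z : Ω → ℝ} (hm : Measurable Z)
    (hZ : ∀ x : ℝ, (μ {a | Z a ≤ x}).toReal = stdNormalCDF x) :
    HasLaw Z (gaussianReal 0 1) μ where
  aemeasurable := hm.aemeasurable
  map_eq := by
    have : IsProbabilityMeasure (μ.map Z) := Measure.isProbabilityMeasure_map hm.aemeasurable
    refine Measure.ext_of_Iic _ _ fun x => ?_
    rw [← ENNReal.toReal_eq_toReal_iff' (measure_ne_top _ _) (measure_ne_top _ _),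
      Measure.map_apply hm measurableSet_Iic, ← measureReal_def, ← measureReal_def,
      ← stdNormalCDF_eq_measureReal_Iic]
    exact hZ x

lemma hasSubgaussianMGF_id_gaussianReal (v : ℝ≥0) :
    HasSubgaussianMGF id v (gaussianReal 0 v) where
  integrable_exp_mul t := integrable_exp_mul_gaussianReal t
  mgf_le t := by simp [mgf_id_gaussianReal]

lemma ProbabilityTheory.HasLaw.hasSubgaussianMGF_of_gaussianReal {Ω : Type*} [MeasurableSpace Ω]
    {μ : Measure Ω} {Z : Ω → ℝ} {v : ℝ≥0} (h : HasLaw Z (gaussianReal 0 v) μ) :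
    HasSubgaussianMGF Z v μ :=
  (HasSubgaussianMGF.id_map_iff h.aemeasurable).1
    (h.map_eq ▸ hasSubgaussianMGF_id_gaussianReal v)

lemma sqrt_two_mul_pi_le_exp : √(2 * π) ≤ exp (3 / 2) := by
  rw [sqrt_le_left (exp_pos _).le, ← exp_nat_mul]
  have := quadratic_le_exp_of_nonneg (show (0 : ℝ) ≤ 2 * (3 / 2) by norm_num)
  norm_num at this ⊢
  linarith [pi_lt_four]

-- The shift `x + 2` rather than `x + 1` absorbs the normalising factor `1/√(2π)`.
lemma exp_le_measureReal_gaussianReal_Ioc {x : ℝ} (hx : 0 ≤ x) :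
    exp (-(x + 2) ^ 2 / 2) ≤ (gaussianReal 0 1).real (Ioc x (x + 1)) := by
  have hpdf : ∀ u ∈ Ioc x (x + 1), exp (-(x + 2) ^ 2 / 2) ≤ gaussianPDFReal 0 1 u := by
    intro u ⟨hxu, hux⟩
    have hu2 : u ^ 2 ≤ (x + 2) ^ 2 - 3 := by nlinarith
    rw [gaussianPDFReal_def]
    simp only [NNReal.coe_one, mul_one, sub_zero]
    rw [le_inv_mul_iff₀ (by positivity)]
    calc √(2 * π) * exp (-(x + 2) ^ 2 / 2) ≤ exp (3 / 2) * exp (-(x + 2) ^ 2 / 2) := by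
          gcongr; exact sqrt_two_mul_pi_le_exp
      _ ≤ exp (-u ^ 2 / 2) := by rw [← exp_add]; gcongr; linarith
  have := setIntegral_ge_of_const_le (μ := volume) measurableSet_Ioc
    (by simp) hpdf (integrable_gaussianPDFReal 0 1).integrableOn
  rw [measureReal_def, gaussianReal_apply_eq_integral _ one_ne_zero,
    ENNReal.toReal_ofReal (setIntegral_nonneg measurableSet_Ioc
      fun u _ => gaussianPDFReal_nonneg 0 1 u)]
  simpa using this

lemma one_sub_stdNormalCDF_le {x : ℝ} (hx : 0 ≤ x) :
    1 - stdNormalCDF x ≤ exp (-x ^ 2 / 2) := by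
  rw [one_sub_stdNormalCDF_eq_measureReal_Ioi]
  calc (gaussianReal 0 1).real (Ioi x) ≤ (gaussianReal 0 1).real {u | x ≤ id u} :=
        measureReal_mono fun u (hu : x < u) => hu.le
    _ ≤ exp (-x ^ 2 / 2) := by
        simpa using (hasSubgaussianMGF_id_gaussianReal 1).measure_ge_le hx

lemma exp_le_one_sub_stdNormalCDF {x : ℝ} (hx : 0 ≤ x) :
    exp (-(x + 2) ^ 2 / 2) ≤ 1 - stdNormalCDF x := by
  rw [one_sub_stdNormalCDF_eq_measureReal_Ioi]
  exact (exp_le_measureReal_gaussianReal_Ioc hx).trans (measureReal_mono Ioc_subset_Ioi_self)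

lemma neg_log_mem_Icc {p A B : ℝ} (hB : exp (-B) ≤ p) (hA : p ≤ exp (-A)) :
    -log p ∈ Icc A B := by
  have hp : 0 < p := (exp_pos _).trans_le hB
  constructor
  · linarith [(log_le_iff_le_exp hp).2 hA]
  · linarith [(le_log_iff_exp_le hp).2 hB]

lemma neg_log_one_sub_stdNormalCDF_mem_Icc {x : ℝ} (hx : 0 ≤ x) :
    -log (1 - stdNormalCDF x) ∈ Icc (x ^ 2 / 2) ((x + 2) ^ 2 / 2) :=
  neg_log_mem_Icc (by simpa [neg_div] using exp_le_one_sub_stdNormalCDF hx)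
    (by simpa [neg_div] using one_sub_stdNormalCDF_le hx)

lemma tendsto_sqrt_two_log_atTop : Tendsto (fun n : ℕ => √(2 * log n)) atTop atTop :=
  tendsto_sqrt_atTop.comp <| (tendsto_log_atTop.comp tendsto_natCast_atTop_atTop).const_mul_atTop
    two_pos

lemma eventually_nonneg_of_stdNormalCDF_eq {β : ℝ} (hβ : 0 < β) {x : ℕ → ℝ}
    (hx : ∀ n : ℕ, 2 ≤ n → stdNormalCDF (x n) = 1 - (n : ℝ) ^ (-β)) :
    ∀ᶠ n in atTop, 0 ≤ x n := by
  have hpow : Tendsto (fun n : ℕ => (n : ℝ) ^ (-β)) atTop (𝓝 0) :=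
    (tendsto_rpow_neg_atTop hβ).comp tendsto_natCast_atTop_atTop
  filter_upwards [eventually_ge_atTop 2, hpow.eventually_lt_const (exp_pos (-2))] with n hn hsmall
  by_contra! hneg
  have := (exp_le_one_sub_stdNormalCDF le_rfl).trans
    (sub_le_sub_left (monotone_stdNormalCDF hneg.le) 1)
  rw [hx n hn] at this
  norm_num at this
  linarith

lemma tendsto_div_sqrt_two_log_of_stdNormalCDF_eq {β : ℝ} (hβ : 0 < β) {x : ℕ → ℝ}
    (hx : ∀ n : ℕ, 2 ≤ n → stdNormalCDF (x n) = 1 - (n : ℝ) ^ (-β)) :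
    Tendsto (fun n : ℕ => x n / √(2 * log n)) atTop (𝓝 √β) := by
  have hbounds : ∀ᶠ n : ℕ in atTop,
      √β - 2 / √(2 * log n) ≤ x n / √(2 * log n) ∧ x n / √(2 * log n) ≤ √β := by
    filter_upwards [eventually_ge_atTop 2, eventually_nonneg_of_stdNormalCDF_eq hβ hx]
      with n hn hx0
    have hlog : 0 < log n := log_pos (by exact_mod_cast hn)
    have hs : 0 < √(2 * log n) := sqrt_pos.2 (by positivity)
    obtain ⟨hlo, hhi⟩ := neg_log_one_sub_stdNormalCDF_mem_Icc hx0
    rw [hx n hn, sub_sub_cancel, log_rpow (by positivity), neg_mul, neg_neg] at hlo hhi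
    have hsβ : √β * √(2 * log n) = √(2 * β * log n) := by
      rw [← sqrt_mul hβ.le]; ring_nf
    constructor
    · rw [le_div_iff₀ hs, sub_mul, div_mul_cancel₀ _ hs.ne', hsβ, sub_le_iff_le_add,
        sqrt_le_left (by positivity)]
      linarith
    · rw [div_le_iff₀ hs, hsβ, le_sqrt hx0 (by positivity)]
      linarith
  refine tendsto_of_tendsto_of_tendsto_of_le_of_le' ?_ tendsto_const_nhds
    (hbounds.mono fun _ h => h.1) (hbounds.mono fun _ h => h.2)
  simpa using tendsto_const_nhds.sub (tendsto_const_nhds.div_atTop tendsto_sqrt_two_log_atTop)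

noncomputable def bivariateNormalRate (ρ a b : ℝ) : ℝ :=
  (a ^ 2 + b ^ 2 - 2 * ρ * a * b) / (2 * (1 - ρ ^ 2))

lemma bivariateNormalRate_eq {ρ : ℝ} (hρ : |ρ| < 1) (a b : ℝ) :
    bivariateNormalRate ρ a b = a ^ 2 / 2 + ((b - ρ * a) / √(1 - ρ ^ 2)) ^ 2 / 2 := by
  have hd : 0 < 1 - ρ ^ 2 := by nlinarith [sq_abs ρ, abs_nonneg ρ]
  rw [bivariateNormalRate, div_pow, sq_sqrt hd.le]
  field_simp
  ring

lemma bivariateNormalRate_div (ρ a b s : ℝ) :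
    bivariateNormalRate ρ (a / s) (b / s) = bivariateNormalRate ρ a b / s ^ 2 := by
  simp only [bivariateNormalRate]
  ring

lemma two_mul_bivariateNormalRate_sqrt (ρ : ℝ) {β γ : ℝ} (hβ : 0 ≤ β) (hγ : 0 ≤ γ) :
    2 * bivariateNormalRate ρ √β √γ = (β + γ - 2 * ρ * √(β * γ)) / (1 - ρ ^ 2) := by
  rw [bivariateNormalRate, ← mul_div_assoc, mul_div_mul_left _ _ two_ne_zero, sq_sqrt hβ,
    sq_sqrt hγ, sqrt_mul hβ]
  ring

lemma tendsto_bivariateNormalRate_div_log {ρ A B : ℝ} {a b : ℕ → ℝ}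
    (ha : Tendsto (fun n : ℕ => a n / √(2 * log n)) atTop (𝓝 A))
    (hb : Tendsto (fun n : ℕ => b n / √(2 * log n)) atTop (𝓝 B)) :
    Tendsto (fun n : ℕ => bivariateNormalRate ρ (a n) (b n) / log n) atTop
      (𝓝 (2 * bivariateNormalRate ρ A B)) := by
  have hcont : Continuous fun p : ℝ × ℝ => 2 * bivariateNormalRate ρ p.1 p.2 := by
    unfold bivariateNormalRate; fun_prop
  refine ((hcont.tendsto (A, B)).comp (ha.prodMk_nhds hb)).congr' ?_
  filter_upwards [eventually_ge_atTop 2] with n hn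
  have hlog : 0 < log n := log_pos (by exact_mod_cast hn)
  simp only [Function.comp_apply, bivariateNormalRate_div, sq_sqrt (by positivity : 0 ≤ 2 * log n)]
  field_simp

lemma Filter.Tendsto.add_const_div_sqrt_two_log {A : ℝ} {a : ℕ → ℝ}
    (ha : Tendsto (fun n : ℕ => a n / √(2 * Real.log n)) atTop (𝓝 A)) (k : ℝ) :
    Tendsto (fun n : ℕ => (a n + k) / √(2 * Real.log n)) atTop (𝓝 A) := by
  simpa [add_div] using ha.add (tendsto_const_nhds.div_atTop tendsto_sqrt_two_log_atTop)

lemma eventually_le_of_tendsto_div {α : Type*} {l : Filter α} {s u v : α → ℝ} {A B : ℝ}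
    (hu : Tendsto (fun n => u n / s n) l (𝓝 A)) (hv : Tendsto (fun n => v n / s n) l (𝓝 B))
    (hBA : B < A) (hs : ∀ᶠ n in l, 0 < s n) : ∀ᶠ n in l, v n ≤ u n := by
  filter_upwards [hv.eventually_lt hu hBA, hs] with n hlt hsn
  exact ((div_lt_div_iff_of_pos_right hsn).1 hlt).le

lemma mul_sqrt_lt_sqrt {ρ β γ : ℝ} (hβ : 0 < β) (hγ : 0 < γ)
    (hregime : ρ ≤ 0 ∨ (0 < ρ ∧ ρ ^ 2 < β / γ)) : ρ * √γ < √β := by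
  rcases hregime with hρ | ⟨hρ, hlt⟩
  · exact (mul_nonpos_of_nonpos_of_nonneg hρ (sqrt_nonneg γ)).trans_lt (sqrt_pos.2 hβ)
  · refine lt_of_pow_lt_pow_left₀ 2 (sqrt_nonneg β) ?_
    rw [mul_pow, sq_sqrt hγ.le, sq_sqrt hβ.le]
    exact (lt_div_iff₀ hγ).1 hlt

section Bivariate

variable {Ω : Type*} [MeasurableSpace Ω] {μ : Measure Ω} {Z₁ Z₂ : Ω → ℝ} {ρ a b : ℝ}

lemma measureReal_linear_comb_ge_le (h₁ : HasLaw Z₁ (gaussianReal 0 1) μ)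
    (h₂ : HasLaw Z₂ (gaussianReal 0 1) μ) (hind : IndepFun Z₁ Z₂ μ) (u v : ℝ) {ε : ℝ}
    (hε : 0 ≤ ε) :
    μ.real {ω | ε ≤ u * Z₁ ω + v * Z₂ ω} ≤ exp (-ε ^ 2 / (2 * (u ^ 2 + v ^ 2))) := by
  refine (((h₁.hasSubgaussianMGF_of_gaussianReal.const_mul u).add_of_indepFun
    (h₂.hasSubgaussianMGF_of_gaussianReal.const_mul v)
    (hind.comp (measurable_const_mul _) (measurable_const_mul _))).measure_ge_le hε).trans_eq ?_
  congr 4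
  change u ^ 2 * 1 + v ^ 2 * 1 = _
  ring

lemma measureReal_bivariate_le_exp (hρ : |ρ| < 1) (h₁ : HasLaw Z₁ (gaussianReal 0 1) μ)
    (h₂ : HasLaw Z₂ (gaussianReal 0 1) μ) (hind : IndepFun Z₁ Z₂ μ)
    (ha : ρ * b ≤ a) (hb : ρ * a ≤ b) :
    μ.real {ω | a < Z₁ ω ∧ b < ρ * Z₁ ω + √(1 - ρ ^ 2) * Z₂ ω}
      ≤ exp (-bivariateNormalRate ρ a b) := by
  have := h₁.isProbabilityMeasure
  have hd : 0 < 1 - ρ ^ 2 := by nlinarith [sq_abs ρ, abs_nonneg ρ]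
  set r := √(1 - ρ ^ 2)
  set q := a ^ 2 + b ^ 2 - 2 * ρ * a * b with hq_def
  have hq : 0 ≤ q := by nlinarith [sq_nonneg (a - ρ * b), sq_nonneg b]
  calc μ.real {ω | a < Z₁ ω ∧ b < ρ * Z₁ ω + r * Z₂ ω}
      ≤ μ.real {ω | q ≤ (a - ρ * b + (b - ρ * a) * ρ) * Z₁ ω + (b - ρ * a) * r * Z₂ ω} := by
        refine measureReal_mono fun ω ⟨h1, h2⟩ => ?_
        have e1 := mul_le_mul_of_nonneg_left h1.le (sub_nonneg.2 ha)
        have e2 := mul_le_mul_of_nonneg_left h2.le (sub_nonneg.2 hb)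
        show q ≤ _
        linarith
    _ ≤ exp (-q ^ 2 / (2 * ((a - ρ * b + (b - ρ * a) * ρ) ^ 2 + ((b - ρ * a) * r) ^ 2))) :=
        measureReal_linear_comb_ge_le h₁ h₂ hind _ _ hq
    _ = exp (-bivariateNormalRate ρ a b) := by
        have hc : (a - ρ * b + (b - ρ * a) * ρ) ^ 2 + ((b - ρ * a) * r) ^ 2 = (1 - ρ ^ 2) * q := by
          rw [mul_pow, sq_sqrt hd.le]; ring
        rw [hc, bivariateNormalRate, ← hq_def]
        rcases hq.eq_or_lt with hq0 | hq0
        · simp [← hq0]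
        · congr 1
          field_simp

lemma exp_le_measureReal_bivariate (hρ : |ρ| < 1) (h₁ : HasLaw Z₁ (gaussianReal 0 1) μ)
    (h₂ : HasLaw Z₂ (gaussianReal 0 1) μ) (hind : IndepFun Z₁ Z₂ μ)
    (ha : 0 ≤ a) (hb : ρ * a ≤ b) :
    exp (-bivariateNormalRate ρ (a + 2) (b + (1 + 2 * ρ + 2 * √(1 - ρ ^ 2))))
      ≤ μ.real {ω | a < Z₁ ω ∧ b < ρ * Z₁ ω + √(1 - ρ ^ 2) * Z₂ ω} := by
  have := h₁.isProbabilityMeasure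
  have hd : 0 < 1 - ρ ^ 2 := by nlinarith [sq_abs ρ, abs_nonneg ρ]
  set r := √(1 - ρ ^ 2) with hr_def
  have hr : 0 < r := sqrt_pos.2 hd
  -- `c` is chosen so that `r c` beats `b - ρ a` by `1 ≥ |ρ| (Z₁ - a)` on the box.
  set c := (b - ρ * a + 1) / r
  have hc : 0 ≤ c := div_nonneg (by linarith) hr.le
  have hrc : r * c = b - ρ * a + 1 := mul_div_cancel₀ _ hr.ne'
  have hrate : bivariateNormalRate ρ (a + 2) (b + (1 + 2 * ρ + 2 * r))
      = (a + 2) ^ 2 / 2 + (c + 2) ^ 2 / 2 := by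
    rw [bivariateNormalRate_eq hρ, ← hr_def]
    congr 3
    rw [div_eq_iff hr.ne']
    linear_combination -hrc
  have hbox : Z₁ ⁻¹' Ioc a (a + 1) ∩ Z₂ ⁻¹' Ioi c
      ⊆ {ω | a < Z₁ ω ∧ b < ρ * Z₁ ω + r * Z₂ ω} := by
    rintro ω ⟨⟨h1, h1'⟩, h2⟩
    refine ⟨h1, ?_⟩
    have : r * c < r * Z₂ ω := mul_lt_mul_of_pos_left h2 hr
    have : |ρ| * (Z₁ ω - a) ≤ 1 := by nlinarith [abs_nonneg ρ]
    nlinarith [neg_abs_le ρ]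
  have hlaw {Z : Ω → ℝ} (h : HasLaw Z (gaussianReal 0 1) μ) {s : Set ℝ} (hs : MeasurableSet s) :
      μ.real (Z ⁻¹' s) = (gaussianReal 0 1).real s := by
    rw [← h.map_eq, map_measureReal_apply_of_aemeasurable h.aemeasurable hs]
  calc exp (-bivariateNormalRate ρ (a + 2) (b + (1 + 2 * ρ + 2 * r)))
      = exp (-(a + 2) ^ 2 / 2) * exp (-(c + 2) ^ 2 / 2) := by
        rw [hrate, ← exp_add]; ring_nf
    _ ≤ (gaussianReal 0 1).real (Ioc a (a + 1)) * (gaussianReal 0 1).real (Ioi c) := by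
        gcongr
        · exact exp_le_measureReal_gaussianReal_Ioc ha
        · exact (exp_le_measureReal_gaussianReal_Ioc hc).trans
            (measureReal_mono Ioc_subset_Ioi_self)
    _ = μ.real (Z₁ ⁻¹' Ioc a (a + 1) ∩ Z₂ ⁻¹' Ioi c) := by
        rw [← hlaw h₁ measurableSet_Ioc, ← hlaw h₂ measurableSet_Ioi]
        simp only [measureReal_def, hind.measure_inter_preimage_eq_mul _ _ measurableSet_Ioc
          measurableSet_Ioi, ENNReal.toReal_mul]
    _ ≤ μ.real {ω | a < Z₁ ω ∧ b < ρ * Z₁ ω + r * Z₂ ω} := measureReal_mono hbox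

lemma neg_log_measureReal_bivariate_mem_Icc (hρ : |ρ| < 1)
    (h₁ : HasLaw Z₁ (gaussianReal 0 1) μ) (h₂ : HasLaw Z₂ (gaussianReal 0 1) μ)
    (hind : IndepFun Z₁ Z₂ μ) (ha₀ : 0 ≤ a) (ha : ρ * b ≤ a) (hb : ρ * a ≤ b) :
    -log (μ.real {ω | a < Z₁ ω ∧ b < ρ * Z₁ ω + √(1 - ρ ^ 2) * Z₂ ω})
      ∈ Icc (bivariateNormalRate ρ a b)
        (bivariateNormalRate ρ (a + 2) (b + (1 + 2 * ρ + 2 * √(1 - ρ ^ 2)))) :=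
  neg_log_mem_Icc (exp_le_measureReal_bivariate hρ h₁ h₂ hind ha₀ hb)
    (measureReal_bivariate_le_exp hρ h₁ h₂ hind ha hb)

end Bivariate

/-- bivariate normal, interior regime: with `X = Z₁`,
`Y = ρZ₁ + √(1-ρ²)Z₂`, `ρ ∈ (-1,1)`, and `Φ(x_β(n)) = 1 - n^{-β}`,
`Φ(x_γ(n)) = 1 - n^{-γ}`: if `ρ ≤ 0`, or `ρ > 0` and `ρ² < min{β/γ, γ/β}`, then
`−log P(X > x_β(n), Y > x_γ(n))/log n → (β + γ − 2ρ√(βγ))/(1 − ρ²)`. -/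
theorem bivariate_normal_interior_regime
    {Ω : Type*} [MeasurableSpace Ω] (μ : Measure Ω) [IsProbabilityMeasure μ]
    (Z₁ Z₂ : Ω → ℝ) (hm₁ : Measurable Z₁) (hm₂ : Measurable Z₂)
    (hind : IndepFun Z₁ Z₂ μ)
    (hZ₁ : ∀ x : ℝ, (μ {a | Z₁ a ≤ x}).toReal = stdNormalCDF x)
    (hZ₂ : ∀ x : ℝ, (μ {a | Z₂ a ≤ x}).toReal = stdNormalCDF x)
    (ρ : ℝ) (hρ : ρ ∈ Set.Ioo (-1:ℝ) 1)
    (β γ : ℝ) (hβ : 0 < β) (hγ : 0 < γ)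
    (xβ xγ : ℕ → ℝ)
    (hxβ : ∀ n : ℕ, 2 ≤ n → stdNormalCDF (xβ n) = 1 - (n : ℝ) ^ (-β))
    (hxγ : ∀ n : ℕ, 2 ≤ n → stdNormalCDF (xγ n) = 1 - (n : ℝ) ^ (-γ))
    (hregime : ρ ≤ 0 ∨ (0 < ρ ∧ ρ ^ 2 < min (β / γ) (γ / β))) :
    Tendsto
      (fun n : ℕ =>
        -Real.log (μ {a | Z₁ a > xβ n ∧
          ρ * Z₁ a + Real.sqrt (1 - ρ ^ 2) * Z₂ a > xγ n}).toReal / Real.log n)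
      atTop (nhds ((β + γ - 2 * ρ * Real.sqrt (β * γ)) / (1 - ρ ^ 2))) := by
  have hρ' : |ρ| < 1 := abs_lt.2 hρ
  have h₁ := hasLaw_gaussianReal_of_stdNormalCDF hm₁ hZ₁
  have h₂ := hasLaw_gaussianReal_of_stdNormalCDF hm₂ hZ₂
  have hxβ_lim := tendsto_div_sqrt_two_log_of_stdNormalCDF_eq hβ hxβ
  have hxγ_lim := tendsto_div_sqrt_two_log_of_stdNormalCDF_eq hγ hxγ
  have hs : ∀ᶠ n : ℕ in atTop, 0 < √(2 * log n) :=
    tendsto_sqrt_two_log_atTop.eventually_gt_atTop 0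
  have hρmul {x : ℕ → ℝ} {A : ℝ} (h : Tendsto (fun n : ℕ => x n / √(2 * log n)) atTop (𝓝 A)) :
      Tendsto (fun n : ℕ => ρ * x n / √(2 * log n)) atTop (𝓝 (ρ * A)) := by
    simpa only [mul_div_assoc] using h.const_mul ρ
  have hxβ_nonneg := eventually_le_of_tendsto_div hxβ_lim (v := fun _ => 0) (B := 0) (by simp)
    (sqrt_pos.2 hβ) hs
  have hxβ_ge := eventually_le_of_tendsto_div hxβ_lim (hρmul hxγ_lim)
    (mul_sqrt_lt_sqrt hβ hγ (hregime.imp_right fun h => ⟨h.1, h.2.trans_le (min_le_left _ _)⟩)) hs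
  have hxγ_ge := eventually_le_of_tendsto_div hxγ_lim (hρmul hxβ_lim)
    (mul_sqrt_lt_sqrt hγ hβ (hregime.imp_right fun h => ⟨h.1, h.2.trans_le (min_le_right _ _)⟩)) hs
  have hbounds := (hxβ_nonneg.and (hxβ_ge.and hxγ_ge)).mono fun n ⟨h₀, hβγ, hγβ⟩ =>
    neg_log_measureReal_bivariate_mem_Icc hρ' h₁ h₂ hind h₀ hβγ hγβ
  have hlog : ∀ᶠ n : ℕ in atTop, 0 ≤ log n :=
    (eventually_ge_atTop 1).mono fun n hn => log_nonneg (by exact_mod_cast hn)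
  rw [← two_mul_bivariateNormalRate_sqrt ρ hβ.le hγ.le]
  refine tendsto_of_tendsto_of_tendsto_of_le_of_le'
    (tendsto_bivariateNormalRate_div_log hxβ_lim hxγ_lim)
    (tendsto_bivariateNormalRate_div_log (hxβ_lim.add_const_div_sqrt_two_log 2)
      (hxγ_lim.add_const_div_sqrt_two_log (1 + 2 * ρ + 2 * √(1 - ρ ^ 2)))) ?_ ?_
  · filter_upwards [hbounds, hlog] with n hn hl using div_le_div_of_nonneg_right hn.1 hl
  · filter_upwards [hbounds, hlog] with n hn hl using div_le_div_of_nonneg_right hn.2 hl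
end

section
/- (Conditional limit for the logistic inverted bivariate extreme value distribution.) Let α ∈ (0,1) and let (X,Y) be a random vector with X, Y ≥ 0 almost surely and joint survivor function P(X > x, Y > y) = exp{−(x^{1/α} + y^{1/α})^α} for all x, y ≥ 0. Then for every x ≥ 0, lim_{n→∞} P( X > x·(log n)^{1−α} | Y > log n ) = exp{−α x^{1/α}}. -/
/-!
Put `t = log n` and `c = x ^ (1/α)`. Since `(x t^(1-α))^(1/α) = c t^(1/α - 1)`, the joint
survivor function at `(x t^(1-α), t)` is `exp(-t (1 + c/t)^α)`, so the conditional probability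
equals `exp(-t ((1 + c/t)^α - 1))`. The exponent is `c` times a difference quotient of `y ↦ y^α`
at `1` with step `c/t`, hence tends to `α c`.
-/

open MeasureTheory Filter Topology

theorem HasDerivAt.tendsto_mul_sub_div_atTop {f : ℝ → ℝ} {f' x : ℝ} (hf : HasDerivAt f f' x)
    (c : ℝ) : Tendsto (fun t => t * (f (x + c / t) - f x)) atTop (𝓝 (c * f')) := by
  rcases eq_or_ne c 0 with rfl | hc
  · simp
  have hstep : Tendsto (fun t : ℝ => c / t) atTop (𝓝[≠] 0) :=
    tendsto_nhdsWithin_iff.mpr ⟨tendsto_const_nhds.div_atTop tendsto_id,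
      (eventually_ne_atTop 0).mono fun t ht => div_ne_zero hc ht⟩
  refine (((hasDerivAt_iff_tendsto_slope_zero.mp hf).comp hstep).const_mul c).congr' ?_
  filter_upwards [eventually_ne_atTop 0] with t ht
  simp only [Function.comp_apply, smul_eq_mul, inv_div]
  field_simp

theorem Real.tendsto_mul_one_add_div_rpow_sub_one (α c : ℝ) :
    Tendsto (fun t : ℝ => t * ((1 + c / t) ^ α - 1)) atTop (𝓝 (α * c)) := by
  have hd : HasDerivAt (fun y : ℝ => y ^ α) α 1 := by
    simpa using Real.hasDerivAt_rpow_const (x := 1) (p := α) (Or.inl one_ne_zero)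
  simpa [mul_comm] using hd.tendsto_mul_sub_div_atTop c

theorem Real.mul_rpow_one_sub_rpow_one_div_add_rpow_one_div_rpow {α x t : ℝ} (hα : 0 < α)
    (hx : 0 ≤ x) (ht : 0 < t) :
    ((x * t ^ (1 - α)) ^ (1 / α) + t ^ (1 / α)) ^ α = t * (1 + x ^ (1 / α) / t) ^ α := by
  have hsum :
      (x * t ^ (1 - α)) ^ (1 / α) + t ^ (1 / α) = t ^ (1 / α) * (1 + x ^ (1 / α) / t) := by
    rw [Real.mul_rpow hx (Real.rpow_nonneg ht.le _), ← Real.rpow_mul ht.le,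
      show (1 - α) * (1 / α) = 1 / α - 1 by field_simp, Real.rpow_sub ht, Real.rpow_one]
    field_simp
    ring
  have hpos : 0 < 1 + x ^ (1 / α) / t := by positivity
  rw [hsum, Real.mul_rpow (Real.rpow_nonneg ht.le _) hpos.le, ← Real.rpow_mul ht.le,
    one_div_mul_cancel hα.ne', Real.rpow_one]

theorem logistic_inverted_BEV_conditional_limit_general
    {Ω : Type*} [MeasurableSpace Ω] (μ : Measure Ω) [IsProbabilityMeasure μ]
    (X Y : Ω → ℝ)
    (α : ℝ) (hα : α ∈ Set.Ioo (0:ℝ) 1)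
    (hYmarg : ∀ y ≥ (0:ℝ), (μ {a | Y a > y}).toReal = Real.exp (-y))
    (hsurv : ∀ x ≥ (0:ℝ), ∀ y ≥ (0:ℝ),
      (μ {a | X a > x ∧ Y a > y}).toReal =
        Real.exp (-(x ^ (1 / α) + y ^ (1 / α)) ^ α)) :
    ∀ x ≥ (0:ℝ),
      Tendsto
        (fun n : ℕ =>
          (μ {a | X a > x * (Real.log n) ^ (1 - α) ∧ Y a > Real.log n}).toReal /
            (μ {a | Y a > Real.log n}).toReal)
        atTop (nhds (Real.exp (-(α * x ^ (1 / α))))) := by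
  intro x hx
  have hlog : Tendsto (fun n : ℕ => Real.log n) atTop atTop :=
    Real.tendsto_log_atTop.comp tendsto_natCast_atTop_atTop
  have hexponent := (Real.tendsto_mul_one_add_div_rpow_sub_one α (x ^ (1 / α))).comp hlog
  refine (Real.continuous_exp.tendsto _).comp hexponent.neg |>.congr' ?_
  filter_upwards [hlog.eventually (eventually_gt_atTop 0)] with n ht
  have hxt : 0 ≤ x * Real.log n ^ (1 - α) := mul_nonneg hx (Real.rpow_nonneg ht.le _)
  rw [Function.comp_apply, Function.comp_apply, hsurv _ hxt _ ht.le, hYmarg _ ht.le,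
    Real.mul_rpow_one_sub_rpow_one_div_add_rpow_one_div_rpow hα.1 hx ht, ← Real.exp_sub]
  ring_nf

/-- conditional limit for the logistic inverted bivariate extreme value
distribution: for `α ∈ (0,1)`, `P(X > x(log n)^{1-α} | Y > log n) → exp{−αx^{1/α}}`. -/
theorem logistic_inverted_BEV_conditional_limit
    {Ω : Type*} [MeasurableSpace Ω] (μ : Measure Ω) [IsProbabilityMeasure μ]
    (X Y : Ω → ℝ)
    (hX : ∀ᵐ a ∂μ, 0 ≤ X a) (hY : ∀ᵐ a ∂μ, 0 ≤ Y a)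
    (α : ℝ) (hα : α ∈ Set.Ioo (0:ℝ) 1)
    (hXmarg : ∀ x ≥ (0:ℝ), (μ {a | X a > x}).toReal = Real.exp (-x))
    (hYmarg : ∀ y ≥ (0:ℝ), (μ {a | Y a > y}).toReal = Real.exp (-y))
    (hsurv : ∀ x ≥ (0:ℝ), ∀ y ≥ (0:ℝ),
      (μ {a | X a > x ∧ Y a > y}).toReal =
        Real.exp (-(x ^ (1 / α) + y ^ (1 / α)) ^ α)) :
    ∀ x ≥ (0:ℝ),
      Tendsto
        (fun n : ℕ =>
          (μ {a | X a > x * (Real.log n) ^ (1 - α) ∧ Y a > Real.log n}).toReal /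
            (μ {a | Y a > Real.log n}).toReal)
        atTop (nhds (Real.exp (-(α * x ^ (1 / α))))) :=
  logistic_inverted_BEV_conditional_limit_general μ X Y α hα hYmarg hsurv
end

section
/- (Asymptotic expansion of the exponent function near the axis.) Let H be a nonnegative Borel measure on the open interval (0,1) with density h with respect to Lebesgue measure, satisfying the moment constraints ∫₀¹ w h(w) dw = ∫₀¹ (1−w) h(w) dw = 1. Suppose there exist u > 0 and v > −1 such that h(w)/(u(1−w)^v) → 1 as w → 1⁻. Define V(x,y) = ∫₀¹ max{w/x, (1−w)/y} h(w) dw for x, y > 0. Then (V(1/β, 1) − 1) / β^{v+2} → u / ((v+1)(v+2)) as β → 0⁺. -/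
/-!
Since `max (β w) (1 - w) = (1 - w) + ((1 + β) w - 1)⁺`, the moment constraint on `(1 - w) h`
gives `V(1/β, 1) - 1 = ∫ ((1 + β) w - 1)⁺ h(w) dw`. This kernel vanishes for `w ≤ 1 - β`, so
as `β → 0⁺` only the germ of `h` at `1⁻` matters, and `h` may be replaced by its equivalent
`u (1 - w)^v` up to a relative `o(1)` error. After `s = 1 - w` the model integral is of Beta
type: `(1 + β) ∫₀^{β/(1+β)} (β/(1+β) - s) s^v ds = (1 + β) (β/(1+β))^{v+2} / ((v+1)(v+2))`.
-/

open MeasureTheory Filter Set Asymptotics Topology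

def excessKernel (β w : ℝ) : ℝ := max ((1 + β) * w - 1) 0

lemma excessKernel_nonneg (β w : ℝ) : 0 ≤ excessKernel β w := le_max_right _ _

lemma excessKernel_eq_zero_of_le {β w : ℝ} (hβ : 0 ≤ β) (hw : w ≤ 1 - β) :
    excessKernel β w = 0 :=
  max_eq_right (by nlinarith)

lemma max_mul_one_sub_eq_excessKernel_add (β w : ℝ) :
    max (β * w) (1 - w) = excessKernel β w + (1 - w) := by
  rw [excessKernel, ← max_add_add_right]
  ring_nf

lemma integrableOn_excessKernel_mul {f : ℝ → ℝ}
    (hf : IntegrableOn (fun w => w * f w) (Ioo 0 1)) (β : ℝ) :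
    IntegrableOn (fun w => excessKernel β w * f w) (Ioo 0 1) := by
  have hbdd : IntegrableOn (fun w => excessKernel β w / w * (w * f w)) (Ioo 0 1) := by
    refine hf.bdd_mul (c := |1 + β|) ?_ ?_
    · have : Measurable fun w => excessKernel β w / w := by unfold excessKernel; fun_prop
      exact this.aestronglyMeasurable
    · refine ae_restrict_of_forall_mem measurableSet_Ioo fun w hw => ?_
      rw [Real.norm_eq_abs, abs_div, abs_of_pos hw.1, div_le_iff₀ hw.1,
        abs_of_nonneg (excessKernel_nonneg β w)]
      exact max_le (by nlinarith [le_abs_self (1 + β), hw.1]) (mul_nonneg (abs_nonneg _) hw.1.le)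
  refine hbdd.congr_fun (fun w hw => ?_) measurableSet_Ioo
  show excessKernel β w / w * (w * f w) = _
  field_simp [hw.1.ne']

lemma integrableOn_mul_one_sub_rpow {v : ℝ} (hv : -1 < v) :
    IntegrableOn (fun w : ℝ => w * (1 - w) ^ v) (Ioo 0 1) := by
  have : IntervalIntegrable (fun w : ℝ => (1 - w) ^ v) volume 1 0 := by
    simpa using (intervalIntegral.intervalIntegrable_rpow' hv (a := 0) (b := 1)).comp_sub_left 1
  exact (intervalIntegrable_iff_integrableOn_Ioo_of_le zero_le_one).mp
    (this.symm.continuousOn_mul continuousOn_id)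

lemma integral_sub_mul_rpow {a v : ℝ} (ha : 0 ≤ a) (hv : -1 < v) :
    ∫ s in 0..a, (a - s) * s ^ v = a ^ (v + 2) / ((v + 1) * (v + 2)) := by
  have hv1 : v + 1 ≠ 0 := by linarith
  have hexpand :
      EqOn (fun s => (a - s) * s ^ v) (fun s => a * s ^ v - s ^ (v + 1)) (uIcc 0 a) := by
    intro s hs
    rw [uIcc_of_le ha] at hs
    simp only [Real.rpow_add_one' hs.1 hv1]
    ring
  rw [intervalIntegral.integral_congr hexpand, intervalIntegral.integral_sub
      ((intervalIntegral.intervalIntegrable_rpow' hv).const_mul a)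
      (intervalIntegral.intervalIntegrable_rpow' (by linarith)),
    intervalIntegral.integral_const_mul, integral_rpow (Or.inl hv),
    integral_rpow (Or.inl (by linarith)), Real.zero_rpow hv1, Real.zero_rpow (by linarith),
    show v + 2 = v + 1 + 1 by ring, Real.rpow_add_one' ha (by linarith : v + 1 + 1 ≠ 0)]
  have : v + 1 + 1 ≠ 0 := by linarith
  field_simp
  ring

lemma integral_max_sub_mul_rpow {a v : ℝ} (ha₀ : 0 ≤ a) (ha₁ : a ≤ 1) (hv : -1 < v) :
    ∫ s in 0..1, max (a - s) 0 * s ^ v = a ^ (v + 2) / ((v + 1) * (v + 2)) := by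
  have hint : ∀ b c : ℝ, IntervalIntegrable (fun s => max (a - s) 0 * s ^ v) volume b c :=
    fun b c => (intervalIntegral.intervalIntegrable_rpow' hv).continuousOn_mul (by fun_prop)
  rw [← intervalIntegral.integral_add_adjacent_intervals (hint 0 a) (hint a 1),
    ← integral_sub_mul_rpow ha₀ hv]
  have hleft : EqOn (fun s => max (a - s) 0 * s ^ v) (fun s => (a - s) * s ^ v) (uIcc 0 a) := by
    intro s hs
    rw [uIcc_of_le ha₀] at hs
    simp only [max_eq_left (sub_nonneg.mpr hs.2)]
  have hright : EqOn (fun s => max (a - s) 0 * s ^ v) (fun _ => 0) (uIcc a 1) := by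
    intro s hs
    rw [uIcc_of_le ha₁] at hs
    simp only [max_eq_right (sub_nonpos.mpr hs.1), zero_mul]
  rw [intervalIntegral.integral_congr hleft, intervalIntegral.integral_congr hright,
    intervalIntegral.integral_zero, add_zero]

lemma excessKernel_one_sub {β : ℝ} (hβ : 0 < β) (s : ℝ) :
    excessKernel β (1 - s) = (1 + β) * max (β / (1 + β) - s) 0 := by
  have h1β : 0 < 1 + β := by linarith
  rw [excessKernel, mul_max_of_nonneg _ _ h1β.le, mul_zero]
  congr 1
  field_simp
  ring

lemma setIntegral_excessKernel_mul_one_sub_rpow {β v : ℝ} (hβ : 0 < β) (hv : -1 < v) :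
    ∫ w in Ioo 0 1, excessKernel β w * (1 - w) ^ v
      = (1 + β) * (β / (1 + β)) ^ (v + 2) / ((v + 1) * (v + 2)) := by
  have h1β : 0 < 1 + β := by linarith
  have hsubst := intervalIntegral.integral_comp_sub_left
    (fun s => excessKernel β (1 - s) * s ^ v) (a := 0) (b := 1) 1
  simp only [sub_sub_cancel, sub_self, sub_zero] at hsubst
  rw [← integral_Ioc_eq_integral_Ioo, ← intervalIntegral.integral_of_le zero_le_one, hsubst]
  simp only [excessKernel_one_sub hβ, mul_assoc, intervalIntegral.integral_const_mul]
  rw [integral_max_sub_mul_rpow (by positivity) ((div_le_one h1β).mpr (by linarith)) hv,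
    mul_div_assoc]

lemma tendsto_setIntegral_excessKernel_mul_one_sub_rpow_div {v : ℝ} (hv : -1 < v) :
    Tendsto (fun β => (∫ w in Ioo 0 1, excessKernel β w * (1 - w) ^ v) / β ^ (v + 2))
      (𝓝[>] 0) (𝓝 (1 / ((v + 1) * (v + 2)))) := by
  have hlim : Tendsto (fun β : ℝ => (1 + β) * (1 + β)⁻¹ ^ (v + 2) / ((v + 1) * (v + 2)))
      (𝓝[>] 0) (𝓝 (1 / ((v + 1) * (v + 2)))) := by
    refine tendsto_nhdsWithin_of_tendsto_nhds ?_
    have hcont : ContinuousAt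
        (fun β : ℝ => (1 + β) * (1 + β)⁻¹ ^ (v + 2) / ((v + 1) * (v + 2))) 0 := by
      fun_prop (disch := norm_num)
    simpa using hcont.tendsto
  refine hlim.congr' (eventually_nhdsWithin_of_forall fun β (hβ : 0 < β) => ?_)
  have h1β : 0 < 1 + β := by linarith
  dsimp only
  rw [setIntegral_excessKernel_mul_one_sub_rpow hβ hv, div_eq_mul_inv β,
    Real.mul_rpow hβ.le (inv_nonneg.mpr h1β.le)]
  have : β ^ (v + 2) ≠ 0 := (Real.rpow_pos_of_pos hβ _).ne'
  field_simp

lemma isLittleO_setIntegral_excessKernel_mul {f g : ℝ → ℝ} (hfg : f =o[𝓝[<] 1] g)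
    (hg : ∀ β, IntegrableOn (fun w => excessKernel β w * g w) (Ioo 0 1)) :
    (fun β => ∫ w in Ioo 0 1, excessKernel β w * f w)
      =o[𝓝[>] 0] fun β => ∫ w in Ioo 0 1, excessKernel β w * |g w| := by
  refine isLittleO_iff.mpr fun c hc => ?_
  obtain ⟨l, hl, hlfg⟩ := mem_nhdsLT_iff_exists_Ioo_subset.mp (hfg.bound hc)
  filter_upwards [Ioo_mem_nhdsGT (sub_pos.mpr hl)] with β hβ
  have hbound : ∀ w ∈ Ioo (0 : ℝ) 1,
      ‖excessKernel β w * f w‖ ≤ c * (excessKernel β w * |g w|) := by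
    intro w hw
    rw [norm_mul, Real.norm_of_nonneg (excessKernel_nonneg β w), mul_left_comm]
    rcases le_or_gt w (1 - β) with hwβ | hwβ
    · simp [excessKernel_eq_zero_of_le hβ.1.le hwβ]
    · refine mul_le_mul_of_nonneg_left ?_ (excessKernel_nonneg β w)
      exact hlfg ⟨by linarith [hβ.2], hw.2⟩
  have hgabs : IntegrableOn (fun w => excessKernel β w * |g w|) (Ioo 0 1) :=
    IntegrableOn.congr_fun (hg β).abs (fun w _ => by
      rw [abs_mul, abs_of_nonneg (excessKernel_nonneg β w)]) measurableSet_Ioo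
  have hnonneg : 0 ≤ ∫ w in Ioo 0 1, excessKernel β w * |g w| :=
    setIntegral_nonneg measurableSet_Ioo fun w _ =>
      mul_nonneg (excessKernel_nonneg β w) (abs_nonneg _)
  calc ‖∫ w in Ioo 0 1, excessKernel β w * f w‖
      ≤ ∫ w in Ioo 0 1, c * (excessKernel β w * |g w|) :=
        norm_integral_le_of_norm_le (hgabs.const_mul c)
          (ae_restrict_of_forall_mem measurableSet_Ioo hbound)
    _ = c * ‖∫ w in Ioo 0 1, excessKernel β w * |g w|‖ := by
        rw [integral_const_mul, Real.norm_of_nonneg hnonneg]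

lemma Asymptotics.IsLittleO.tendsto_div_zero {α : Type*} {l : Filter α} {f g k : α → ℝ}
    {L : ℝ} (hfg : f =o[l] g) (hg : Tendsto (fun x => g x / k x) l (𝓝 L)) :
    Tendsto (fun x => f x / k x) l (𝓝 0) := by
  have : (fun x => f x / k x) =o[l] fun x => g x / k x := by
    simpa only [div_eq_mul_inv] using hfg.mul_isBigO (isBigO_refl (fun x => (k x)⁻¹) l)
  exact (isLittleO_one_iff ℝ).mp (this.trans_isBigO (hg.isBigO_one ℝ))

lemma setIntegral_excessKernel_mul_abs_const_mul_one_sub_rpow (u v β : ℝ) :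
    ∫ w in Ioo 0 1, excessKernel β w * |u * (1 - w) ^ v|
      = |u| * ∫ w in Ioo 0 1, excessKernel β w * (1 - w) ^ v := by
  rw [← integral_const_mul]
  refine setIntegral_congr_fun measurableSet_Ioo fun w hw => ?_
  rw [abs_mul, abs_of_nonneg (Real.rpow_nonneg (sub_nonneg.mpr hw.2.le) v)]
  ring

lemma sub_one_eq_setIntegral_excessKernel_mul {h : ℝ → ℝ} {V : ℝ → ℝ → ℝ}
    (hint1 : IntegrableOn (fun w => w * h w) (Ioo 0 1))
    (hint2 : IntegrableOn (fun w => (1 - w) * h w) (Ioo 0 1))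
    (hm2 : ∫ w in Ioo 0 1, (1 - w) * h w = 1)
    (hV : ∀ x > (0 : ℝ), ∀ y > (0 : ℝ),
      V x y = ∫ w in Ioo 0 1, max (w / x) ((1 - w) / y) * h w)
    {β : ℝ} (hβ : 0 < β) :
    V (1 / β) 1 - 1 = ∫ w in Ioo 0 1, excessKernel β w * h w := by
  have hmax : ∀ w, max (w / (1 / β)) ((1 - w) / 1) * h w
      = (1 - w) * h w + excessKernel β w * h w := fun w => by
    rw [div_div_eq_mul_div, div_one, div_one, mul_comm w,
      max_mul_one_sub_eq_excessKernel_add]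
    ring
  simp only [hV _ (one_div_pos.mpr hβ) 1 one_pos, hmax]
  rw [integral_add hint2 (integrableOn_excessKernel_mul hint1 β), hm2, add_sub_cancel_left]

theorem exponent_function_expansion_near_axis_general
    (h : ℝ → ℝ)
    (hint1 : IntegrableOn (fun w => w * h w) (Set.Ioo (0:ℝ) 1))
    (hint2 : IntegrableOn (fun w => (1 - w) * h w) (Set.Ioo (0:ℝ) 1))
    (hm2 : ∫ w in Set.Ioo (0:ℝ) 1, (1 - w) * h w = 1)
    (u v : ℝ) (hv : -1 < v)
    (htail : Tendsto (fun w => h w / (u * (1 - w) ^ v))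
      (nhdsWithin 1 (Set.Iio 1)) (nhds 1))
    (V : ℝ → ℝ → ℝ)
    (hV : ∀ x > (0:ℝ), ∀ y > (0:ℝ),
      V x y = ∫ w in Set.Ioo (0:ℝ) 1, max (w / x) ((1 - w) / y) * h w) :
    Tendsto (fun β : ℝ => (V (1 / β) 1 - 1) / β ^ (v + 2))
      (nhdsWithin 0 (Set.Ioi 0)) (nhds (u / ((v + 1) * (v + 2)))) := by
  have hJ := tendsto_setIntegral_excessKernel_mul_one_sub_rpow_div hv
  have hPint : ∀ β, IntegrableOn (fun w => excessKernel β w * (u * (1 - w) ^ v)) (Ioo 0 1) :=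
    integrableOn_excessKernel_mul <| IntegrableOn.congr_fun
      ((integrableOn_mul_one_sub_rpow hv).const_mul u) (fun w _ => by ring) measurableSet_Ioo
  have hrem : Tendsto
      (fun β => (∫ w in Ioo 0 1, excessKernel β w * (h w - u * (1 - w) ^ v)) / β ^ (v + 2))
      (𝓝[>] 0) (𝓝 0) :=
    (isLittleO_setIntegral_excessKernel_mul (isEquivalent_of_tendsto_one htail).isLittleO
      hPint).tendsto_div_zero ((hJ.const_mul |u|).congr fun β => by
        rw [setIntegral_excessKernel_mul_abs_const_mul_one_sub_rpow, mul_div_assoc])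
  have hlim := (hJ.const_mul u).add hrem
  rw [mul_one_div, add_zero] at hlim
  refine hlim.congr' (eventually_nhdsWithin_of_forall fun β (hβ : 0 < β) => ?_)
  simp only [sub_one_eq_setIntegral_excessKernel_mul hint1 hint2 hm2 hV hβ, mul_sub]
  rw [integral_sub (integrableOn_excessKernel_mul hint1 β) (hPint β)]
  simp only [mul_left_comm _ u, integral_const_mul]
  ring

/-- asymptotic expansion of the exponent function near the axis: if the
spectral density `h` on `(0,1)` satisfies the moment constraints
`∫₀¹ w h(w) dw = ∫₀¹ (1-w) h(w) dw = 1` and `h(w) ~ u(1-w)^v` as `w → 1⁻`, then for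
`V(x,y) = ∫₀¹ max{w/x, (1-w)/y} h(w) dw` one has
`(V(1/β, 1) − 1)/β^{v+2} → u/((v+1)(v+2))` as `β → 0⁺`. -/
theorem exponent_function_expansion_near_axis
    (h : ℝ → ℝ) (hmeas : Measurable h)
    (hnonneg : ∀ w ∈ Set.Ioo (0:ℝ) 1, 0 ≤ h w)
    (hint1 : IntegrableOn (fun w => w * h w) (Set.Ioo (0:ℝ) 1))
    (hint2 : IntegrableOn (fun w => (1 - w) * h w) (Set.Ioo (0:ℝ) 1))
    (hm1 : ∫ w in Set.Ioo (0:ℝ) 1, w * h w = 1)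
    (hm2 : ∫ w in Set.Ioo (0:ℝ) 1, (1 - w) * h w = 1)
    (u v : ℝ) (hu : 0 < u) (hv : -1 < v)
    (htail : Tendsto (fun w => h w / (u * (1 - w) ^ v))
      (nhdsWithin 1 (Set.Iio 1)) (nhds 1))
    (V : ℝ → ℝ → ℝ)
    (hV : ∀ x > (0:ℝ), ∀ y > (0:ℝ),
      V x y = ∫ w in Set.Ioo (0:ℝ) 1, max (w / x) ((1 - w) / y) * h w) :
    Tendsto (fun β : ℝ => (V (1 / β) 1 - 1) / β ^ (v + 2))
      (nhdsWithin 0 (Set.Ioi 0)) (nhds (u / ((v + 1) * (v + 2)))) :=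
  exponent_function_expansion_near_axis_general h hint1 hint2 hm2 u v hv htail V hV
end
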